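/- arXiv:1510.07833 — 4 statements merged into one kernel-verified Lean document; each statement's English description precedes it below -/
import Mathlib

section
/- Let p ≥ 1 be a real number, E a Banach space and T > 0. The space V^p([0,T],E) of continuous paths of finite p-variation, endowed with the p-variation norm ‖x‖ = ‖x‖_{p,[0,T]} + sup_{t∈[0,T]} ‖x_t‖, is complete: every Cauchy sequence in this norm converges to an element of V^p([0,T],E). -/
open Finset Set

/-- The set of all subdivision sums `Σ_i ‖x(t_{i+1}) - x(t_i)‖^p` over finite
subdivisions `a = t_0 ≤ t_1 ≤ … ≤ t_n = b` of `[a,b]`. -/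
noncomputable def pVarSums {E : Type*} [NormedAddCommGroup E]
    (p a b : ℝ) (x : ℝ → E) : Set ℝ :=
  {v | ∃ (n : ℕ) (t : ℕ → ℝ), t 0 = a ∧ t n = b ∧ (∀ i < n, t i ≤ t (i + 1)) ∧
        v = ∑ i ∈ Finset.range n, ‖x (t (i + 1)) - x (t i)‖ ^ p}

/-- A path has finite `p`-variation on `[a,b]` if its subdivision sums are bounded. -/
def HasFinitePVariation {E : Type*} [NormedAddCommGroup E]
    (p a b : ℝ) (x : ℝ → E) : Prop :=
  BddAbove (pVarSums p a b x)

/-- The `p`-variation `‖x‖_{p,[a,b]}`. -/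
noncomputable def pVar {E : Type*} [NormedAddCommGroup E]
    (p a b : ℝ) (x : ℝ → E) : ℝ :=
  sSup (pVarSums p a b x) ^ (1 / p)

/-- The `p`-variation norm `‖x‖_{p,[0,T]} + sup_{t ∈ [0,T]} ‖x t‖`. -/
noncomputable def pVarNorm {E : Type*} [NormedAddCommGroup E]
    (p T : ℝ) (x : ℝ → E) : ℝ :=
  pVar p 0 T x + sSup ((fun t => ‖x t‖) '' Set.Icc 0 T)

lemma pVarSums_nonneg {E : Type*} [NormedAddCommGroup E] {p a b : ℝ} {x : ℝ → E} :
    ∀ v ∈ pVarSums p a b x, 0 ≤ v := by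
  rintro v ⟨n, t, -, -, -, rfl⟩
  exact Finset.sum_nonneg fun i _ => Real.rpow_nonneg (norm_nonneg _) p

lemma subdiv_mem {a b : ℝ} {n : ℕ} {t : ℕ → ℝ} (h0 : t 0 = a) (hn : t n = b)
    (hm : ∀ i < n, t i ≤ t (i + 1)) : ∀ i ≤ n, t i ∈ Set.Icc a b := by
  have key : ∀ j, j ≤ n → ∀ i ≤ j, t i ≤ t j := by
    intro j
    induction j with
    | zero => intro _ i hi; simp [Nat.le_zero.mp hi]
    | succ k ih =>
      intro hk i hi
      rcases Nat.eq_or_lt_of_le hi with rfl | h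
      · exact le_rfl
      · exact (ih (by omega) i (by omega)).trans (hm k (by omega))
  intro i hi
  exact ⟨h0 ▸ key i hi 0 (Nat.zero_le _), hn ▸ key n le_rfl i hi⟩

lemma minkowski_sum {E : Type*} [NormedAddCommGroup E] {p : ℝ} (hp : 1 ≤ p)
    (n : ℕ) (f g : ℕ → E) :
    (∑ i ∈ Finset.range n, ‖f i + g i‖ ^ p) ^ (1 / p) ≤
      (∑ i ∈ Finset.range n, ‖f i‖ ^ p) ^ (1 / p) +
        (∑ i ∈ Finset.range n, ‖g i‖ ^ p) ^ (1 / p) := by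
  have hp0 : (0 : ℝ) < p := lt_of_lt_of_le one_pos hp
  have h1 : (∑ i ∈ Finset.range n, ‖f i + g i‖ ^ p) ≤
      ∑ i ∈ Finset.range n, (‖f i‖ + ‖g i‖) ^ p :=
    Finset.sum_le_sum fun i _ => Real.rpow_le_rpow (norm_nonneg _) (norm_add_le _ _) hp0.le
  calc (∑ i ∈ Finset.range n, ‖f i + g i‖ ^ p) ^ (1 / p)
      ≤ (∑ i ∈ Finset.range n, (‖f i‖ + ‖g i‖) ^ p) ^ (1 / p) :=
        Real.rpow_le_rpow (Finset.sum_nonneg fun i _ => Real.rpow_nonneg (norm_nonneg _) p)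
          h1 (by positivity)
    _ ≤ _ := Real.Lp_add_le_of_nonneg _ hp (fun i _ => norm_nonneg _) (fun i _ => norm_nonneg _)

lemma sums_sub_le {E : Type*} [NormedAddCommGroup E] {p a b : ℝ} (hp : 1 ≤ p)
    {f g : ℝ → E} {Mf Mg : ℝ}
    (hf : ∀ v ∈ pVarSums p a b f, v ≤ Mf) (hg : ∀ v ∈ pVarSums p a b g, v ≤ Mg) :
    ∀ v ∈ pVarSums p a b (f - g), v ≤ (Mf ^ (1 / p) + Mg ^ (1 / p)) ^ p := by
  have hp0 : (0 : ℝ) < p := lt_of_lt_of_le one_pos hp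
  have h1p : (0 : ℝ) ≤ 1 / p := by positivity
  rintro v ⟨n, t, h0, hn, hm, rfl⟩
  set A := ∑ i ∈ Finset.range n, ‖f (t (i + 1)) - f (t i)‖ ^ p with hA
  set B := ∑ i ∈ Finset.range n, ‖g (t (i + 1)) - g (t i)‖ ^ p with hB
  set V := ∑ i ∈ Finset.range n, ‖(f - g) (t (i + 1)) - (f - g) (t i)‖ ^ p with hV
  have hAle : A ≤ Mf := hf _ ⟨n, t, h0, hn, hm, rfl⟩
  have hBle : B ≤ Mg := hg _ ⟨n, t, h0, hn, hm, rfl⟩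
  have hA0 : 0 ≤ A := Finset.sum_nonneg fun i _ => Real.rpow_nonneg (norm_nonneg _) p
  have hB0 : 0 ≤ B := Finset.sum_nonneg fun i _ => Real.rpow_nonneg (norm_nonneg _) p
  have hV0 : 0 ≤ V := Finset.sum_nonneg fun i _ => Real.rpow_nonneg (norm_nonneg _) p
  have hmink : V ^ (1 / p) ≤ A ^ (1 / p) + B ^ (1 / p) := by
    have key := minkowski_sum hp n (fun i => f (t (i + 1)) - f (t i))
      (fun i => -(g (t (i + 1)) - g (t i)))
    have he : ∀ i, (f - g) (t (i + 1)) - (f - g) (t i)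
        = (f (t (i + 1)) - f (t i)) + -(g (t (i + 1)) - g (t i)) := by
      intro i; simp only [Pi.sub_apply]; abel
    simp only [norm_neg] at key
    rw [hV]
    simp only [he]
    exact key
  calc V = (V ^ (1 / p)) ^ p := by
        rw [← Real.rpow_mul hV0, one_div_mul_cancel hp0.ne', Real.rpow_one]
    _ ≤ (A ^ (1 / p) + B ^ (1 / p)) ^ p :=
        Real.rpow_le_rpow (Real.rpow_nonneg hV0 _) hmink hp0.le
    _ ≤ (Mf ^ (1 / p) + Mg ^ (1 / p)) ^ p :=
        Real.rpow_le_rpow (add_nonneg (Real.rpow_nonneg hA0 _) (Real.rpow_nonneg hB0 _))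
          (add_le_add (Real.rpow_le_rpow hA0 hAle h1p) (Real.rpow_le_rpow hB0 hBle h1p)) hp0.le

lemma hasFin_sub {E : Type*} [NormedAddCommGroup E] {p a b : ℝ} (hp : 1 ≤ p)
    {f g : ℝ → E} (hf : HasFinitePVariation p a b f) (hg : HasFinitePVariation p a b g) :
    HasFinitePVariation p a b (f - g) :=
  ⟨_, fun v hv => sums_sub_le hp (fun w hw => le_csSup hf hw) (fun w hw => le_csSup hg hw) v hv⟩

lemma pVar_nonneg {E : Type*} [NormedAddCommGroup E] {p a b : ℝ} {x : ℝ → E} :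
    0 ≤ pVar p a b x :=
  Real.rpow_nonneg (Real.sSup_nonneg pVarSums_nonneg) _

lemma sums_le_of_pVar_le {E : Type*} [NormedAddCommGroup E] {p a b : ℝ} (hp : 1 ≤ p)
    {f : ℝ → E} (hb : HasFinitePVariation p a b f) {ε : ℝ} (h : pVar p a b f ≤ ε) :
    ∀ v ∈ pVarSums p a b f, v ≤ ε ^ p := by
  have hp0 : (0 : ℝ) < p := lt_of_lt_of_le one_pos hp
  intro v hv
  have hs0 : 0 ≤ sSup (pVarSums p a b f) := Real.sSup_nonneg pVarSums_nonneg
  calc v ≤ sSup (pVarSums p a b f) := le_csSup hb hv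
    _ = (sSup (pVarSums p a b f) ^ (1 / p)) ^ p := by
        rw [← Real.rpow_mul hs0, one_div_mul_cancel hp0.ne', Real.rpow_one]
    _ ≤ ε ^ p := Real.rpow_le_rpow (Real.rpow_nonneg hs0 _) h hp0.le


/-- `V^p([0,T],E)` with the `p`-variation norm is complete: every Cauchy sequence
of continuous paths of finite `p`-variation converges in the `p`-variation norm to a
continuous path of finite `p`-variation. -/
theorem statement2 (p T : ℝ) (hp : 1 ≤ p) (hT : 0 < T)
    (E : Type*) [NormedAddCommGroup E] [NormedSpace ℝ E] [CompleteSpace E]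
    (x : ℕ → ℝ → E)
    (hcont : ∀ n, ContinuousOn (x n) (Set.Icc 0 T))
    (hfin : ∀ n, HasFinitePVariation p 0 T (x n))
    (hcauchy : ∀ ε : ℝ, 0 < ε → ∃ N : ℕ, ∀ m ≥ N, ∀ n ≥ N,
      pVarNorm p T (x m - x n) ≤ ε) :
    ∃ y : ℝ → E, ContinuousOn y (Set.Icc 0 T) ∧ HasFinitePVariation p 0 T y ∧
      Filter.Tendsto (fun n => pVarNorm p T (x n - y)) Filter.atTop (nhds 0) := by
  haveI : Nonempty E := ⟨0⟩
  have hp0 : (0 : ℝ) < p := lt_of_lt_of_le one_pos hp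
  have h1p : (0 : ℝ) ≤ 1 / p := by positivity
  have hsupn : ∀ f : ℝ → E, 0 ≤ sSup ((fun t => ‖f t‖) '' Set.Icc 0 T) := fun f =>
    Real.sSup_nonneg (by rintro v ⟨t, -, rfl⟩; exact norm_nonneg _)
  -- pointwise bound by the p-variation norm
  have hpoint : ∀ m n, ∀ t ∈ Set.Icc (0:ℝ) T, ‖x m t - x n t‖ ≤ pVarNorm p T (x m - x n) := by
    intro m n t ht
    have hbdd : BddAbove ((fun t => ‖(x m - x n) t‖) '' Set.Icc 0 T) :=
      IsCompact.bddAbove_image isCompact_Icc (((hcont m).sub (hcont n)).norm)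
    have h1 : ‖x m t - x n t‖ ≤ sSup ((fun t => ‖(x m - x n) t‖) '' Set.Icc 0 T) :=
      le_csSup hbdd ⟨t, ht, rfl⟩
    have := pVar_nonneg (p := p) (a := 0) (b := T) (x := x m - x n)
    unfold pVarNorm
    linarith
  have hucauchy : ∀ ε : ℝ, 0 < ε → ∃ N, ∀ m ≥ N, ∀ n ≥ N,
      ∀ t ∈ Set.Icc (0:ℝ) T, ‖x m t - x n t‖ ≤ ε := by
    intro ε hε
    obtain ⟨N, hN⟩ := hcauchy ε hε
    exact ⟨N, fun m hm n hn t ht => (hpoint m n t ht).trans (hN m hm n hn)⟩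
  -- pointwise limit
  have hptwise : ∀ t ∈ Set.Icc (0:ℝ) T, CauchySeq (fun n => x n t) := by
    intro t ht
    rw [Metric.cauchySeq_iff']
    intro ε hε
    obtain ⟨N, hN⟩ := hucauchy (ε / 2) (by linarith)
    refine ⟨N, fun n hn => lt_of_le_of_lt ?_ (by linarith : ε / 2 < ε)⟩
    simpa [dist_eq_norm] using hN n hn N le_rfl t ht
  set y : ℝ → E := fun t => Filter.limUnder Filter.atTop (fun n => x n t) with hy
  have hylim : ∀ t ∈ Set.Icc (0:ℝ) T,
      Filter.Tendsto (fun n => x n t) Filter.atTop (nhds (y t)) := by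
    intro t ht
    obtain ⟨l, hl⟩ := cauchySeq_tendsto_of_complete (hptwise t ht)
    have : y t = l := hl.limUnder_eq
    rw [this]; exact hl
  -- key estimate
  have hkey : ∀ ε : ℝ, 0 < ε → ∃ N, ∀ n ≥ N,
      (∀ v ∈ pVarSums p 0 T (x n - y), v ≤ ε ^ p) ∧
      (∀ t ∈ Set.Icc (0:ℝ) T, ‖x n t - y t‖ ≤ ε) := by
    intro ε hε
    obtain ⟨N, hN⟩ := hcauchy ε hε
    refine ⟨N, fun n hn => ⟨?_, ?_⟩⟩
    · rintro v ⟨k, t, h0, hk, hm, rfl⟩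
      have hts : ∀ i ≤ k, t i ∈ Set.Icc (0:ℝ) T := subdiv_mem h0 hk hm
      have htend : Filter.Tendsto
          (fun m => ∑ i ∈ Finset.range k, ‖(x n - x m) (t (i + 1)) - (x n - x m) (t i)‖ ^ p)
          Filter.atTop
          (nhds (∑ i ∈ Finset.range k, ‖(x n - y) (t (i + 1)) - (x n - y) (t i)‖ ^ p)) := by
        apply tendsto_finset_sum
        intro i hi
        rw [Finset.mem_range] at hi
        have h1 : Filter.Tendsto (fun m => x m (t (i + 1))) Filter.atTop
            (nhds (y (t (i + 1)))) := hylim _ (hts _ (by omega))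
        have h2 : Filter.Tendsto (fun m => x m (t i)) Filter.atTop (nhds (y (t i))) :=
          hylim _ (hts _ (by omega))
        have hA := Filter.Tendsto.const_sub (x n (t (i + 1))) h1
        have hB := Filter.Tendsto.const_sub (x n (t i)) h2
        have h3 : Filter.Tendsto
            (fun m => ‖(x n - x m) (t (i + 1)) - (x n - x m) (t i)‖) Filter.atTop
            (nhds ‖(x n - y) (t (i + 1)) - (x n - y) (t i)‖) := by
          have := (hA.sub hB).norm
          simpa [Pi.sub_apply] using this
        have h4 := ((Real.continuousAt_rpow_const _ p (Or.inr hp0.le)).tendsto).comp h3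
        simpa [Function.comp_def] using h4
      refine le_of_tendsto htend ?_
      filter_upwards [Filter.eventually_ge_atTop N] with m hm2
      have hbdd : HasFinitePVariation p 0 T (x n - x m) := hasFin_sub hp (hfin n) (hfin m)
      have hle : pVar p 0 T (x n - x m) ≤ ε := by
        have h4 := hN n hn m hm2
        unfold pVarNorm at h4
        linarith [hsupn (x n - x m)]
      exact sums_le_of_pVar_le hp hbdd hle _ ⟨k, t, h0, hk, hm, rfl⟩
    · intro t ht
      have htend : Filter.Tendsto (fun m => ‖x n t - x m t‖) Filter.atTop
          (nhds ‖x n t - y t‖) := (tendsto_const_nhds.sub (hylim t ht)).norm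
      refine le_of_tendsto htend ?_
      filter_upwards [Filter.eventually_ge_atTop N] with m hm2
      exact (hpoint n m t ht).trans (hN n hn m hm2)
  -- continuity of y
  have hunif : TendstoUniformlyOn x y Filter.atTop (Set.Icc 0 T) := by
    have hc : UniformCauchySeqOn x Filter.atTop (Set.Icc 0 T) := by
      rw [Metric.uniformCauchySeqOn_iff]
      intro ε hε
      obtain ⟨N, hN⟩ := hucauchy (ε / 2) (by linarith)
      refine ⟨N, fun m hm n hn t ht => lt_of_le_of_lt ?_ (by linarith : ε / 2 < ε)⟩
      simpa [dist_eq_norm] using hN m hm n hn t ht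
    exact hc.tendstoUniformlyOn_of_tendsto hylim
  have hycont : ContinuousOn y (Set.Icc 0 T) :=
    hunif.continuousOn (Filter.Eventually.of_forall hcont).frequently
  -- finite p-variation of y
  obtain ⟨N1, hN1⟩ := hkey 1 one_pos
  have hyfin : HasFinitePVariation p 0 T y := by
    have heq : x N1 - (x N1 - y) = y := by funext t; simp
    rw [HasFinitePVariation, ← heq]
    exact ⟨_, fun v hv => sums_sub_le hp (fun w hw => le_csSup (hfin N1) hw)
      (hN1 N1 le_rfl).1 v hv⟩
  refine ⟨y, hycont, hyfin, ?_⟩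
  rw [Metric.tendsto_atTop]
  intro ε hε
  obtain ⟨N, hN⟩ := hkey (ε / 3) (by linarith)
  refine ⟨N, fun n hn => ?_⟩
  obtain ⟨h1, h2⟩ := hN n hn
  have hpvar : pVar p 0 T (x n - y) ≤ ε / 3 := by
    have hs : sSup (pVarSums p 0 T (x n - y)) ≤ (ε / 3) ^ p :=
      Real.sSup_le h1 (Real.rpow_nonneg (by linarith) p)
    have h5 := Real.rpow_le_rpow (Real.sSup_nonneg pVarSums_nonneg) hs h1p
    have h6 : ((ε / 3 : ℝ) ^ p) ^ (1 / p) = ε / 3 := by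
      rw [← Real.rpow_mul (by linarith), mul_one_div_cancel hp0.ne', Real.rpow_one]
    rw [h6] at h5
    exact h5
  have hsup : sSup ((fun t => ‖(x n - y) t‖) '' Set.Icc 0 T) ≤ ε / 3 := by
    refine Real.sSup_le ?_ (by linarith)
    rintro v ⟨t, ht, rfl⟩
    simpa using h2 t ht
  have hnn : 0 ≤ pVarNorm p T (x n - y) := add_nonneg pVar_nonneg (hsupn _)
  rw [Real.dist_eq, sub_zero, abs_of_nonneg hnn]
  have : pVarNorm p T (x n - y) ≤ 2 * (ε / 3) := by
    unfold pVarNorm; linarith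
  linarith
end

section
/- Let p ≥ 1, E a normed vector space, T > 0, and let x : [0,T] → E be a continuous path of finite p-variation on [0,T]. Then the function ω defined on the simplex Δ_{[0,T]} by ω(s,t) = ‖x‖_{p,[s,t]}^p (the p-th power of the p-variation of x on [s,t]) is a control: it is continuous, superadditive, and vanishes on the diagonal. -/
open Finset Set

section helpers

variable {E : Type*} [NormedAddCommGroup E] {p a b m T s t u v w : ℝ} {x : ℝ → E}

lemma pvs_nonneg (hp : 1 ≤ p) (hv : v ∈ pVarSums p a b x) : 0 ≤ v := by
  obtain ⟨n, t, -, -, -, rfl⟩ := hv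
  exact Finset.sum_nonneg fun i _ => Real.rpow_nonneg (norm_nonneg _) _

lemma pvs_sSup_nonneg (hp : 1 ≤ p) : 0 ≤ sSup (pVarSums p a b x) :=
  Real.sSup_nonneg fun v hv => pvs_nonneg hp hv

lemma pvs_single (hab : a ≤ b) : ‖x b - x a‖ ^ p ∈ pVarSums p a b x := by
  refine ⟨1, fun i => if i = 0 then a else b, by simp, by simp, ?_, ?_⟩
  · intro i hi
    interval_cases i
    simpa using hab
  · simp

lemma pvs_chain {n : ℕ} {t : ℕ → ℝ} (ht : ∀ i < n, t i ≤ t (i + 1)) :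
    ∀ i j, i ≤ j → j ≤ n → t i ≤ t j := by
  intro i j hij hjn
  induction hij with
  | refl => exact le_refl _
  | @step k hk ih =>
      exact le_trans (ih (le_trans (Nat.le_succ k) hjn)) (ht k (Nat.lt_of_succ_le hjn))

lemma pvs_concat (hu : u ∈ pVarSums p a m x) (hv : v ∈ pVarSums p m b x) :
    u + v ∈ pVarSums p a b x := by
  obtain ⟨n₁, t₁, h10, h1n, h1m, rfl⟩ := hu
  obtain ⟨n₂, t₂, h20, h2n, h2m, rfl⟩ := hv
  refine ⟨n₁ + n₂, fun i => if i ≤ n₁ then t₁ i else t₂ (i - n₁), by simp [h10], ?_, ?_, ?_⟩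
  · by_cases h : n₂ = 0
    · subst h
      simp only [Nat.add_zero, le_refl, if_pos]
      rw [h1n, ← h2n, h20]
    · have : ¬ (n₁ + n₂ ≤ n₁) := by omega
      simp only [this, if_false]
      rw [show n₁ + n₂ - n₁ = n₂ from by omega, h2n]
  · intro i hi
    by_cases h1 : i + 1 ≤ n₁
    · simp only [show i ≤ n₁ from by omega, if_pos, h1, if_true]
      exact h1m i (by omega)
    · by_cases h2 : i ≤ n₁
      · have hi' : i = n₁ := by omega
        subst hi'
        simp only [le_refl, if_pos, h1, if_neg]
        rw [show i + 1 - i = 1 from by omega, h1n, ← h20]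
        exact pvs_chain h2m 0 1 (by omega) (by omega)
      · simp only [h2, if_neg, h1]
        rw [show i + 1 - n₁ = (i - n₁) + 1 from by omega]
        exact h2m (i - n₁) (by omega)
  · rw [Finset.sum_range_add]
    congr 1
    · apply Finset.sum_congr rfl
      intro i hi
      simp only [Finset.mem_range] at hi
      simp only [show i ≤ n₁ from by omega, if_pos, show i + 1 ≤ n₁ from by omega, if_true]
    · apply Finset.sum_congr rfl
      intro i hi
      simp only [Finset.mem_range] at hi
      have e1 : ¬ (n₁ + i + 1 ≤ n₁) := by omega
      simp only [e1, if_false]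
      rw [show n₁ + i + 1 - n₁ = i + 1 from by omega]
      by_cases h : i = 0
      · subst h
        simp only [le_refl, Nat.add_zero, if_pos, h1n, ← h20]
      · simp only [show ¬ (n₁ + i ≤ n₁) from by omega, if_false,
          show n₁ + i - n₁ = i from by omega]

end helpers


section helpers2
variable {E : Type*} [NormedAddCommGroup E] {p a b m T s t u v w : ℝ} {x : ℝ → E}


lemma pvs_nonempty (hab : a ≤ b) : (pVarSums p a b x).Nonempty :=
  ⟨_, pvs_single hab⟩

lemma pvs_le_big (hp : 1 ≤ p) (hs : 0 ≤ s) (hst : s ≤ t) (htT : t ≤ T)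
    (hfin : HasFinitePVariation p 0 T x) (hw : w ∈ pVarSums p s t x) :
    w ≤ sSup (pVarSums p 0 T x) := by
  have h1 : ‖x s - x 0‖ ^ p ∈ pVarSums p 0 s x := pvs_single hs
  have h2 : ‖x T - x t‖ ^ p ∈ pVarSums p t T x := pvs_single htT
  have hmem : ‖x s - x 0‖ ^ p + w + ‖x T - x t‖ ^ p ∈ pVarSums p 0 T x :=
    pvs_concat (pvs_concat h1 hw) h2
  have := le_csSup hfin hmem
  have n1 : (0:ℝ) ≤ ‖x s - x 0‖ ^ p := Real.rpow_nonneg (norm_nonneg _) _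
  have n2 : (0:ℝ) ≤ ‖x T - x t‖ ^ p := Real.rpow_nonneg (norm_nonneg _) _
  linarith

lemma pvs_bdd (hp : 1 ≤ p) (hs : 0 ≤ s) (hst : s ≤ t) (htT : t ≤ T)
    (hfin : HasFinitePVariation p 0 T x) : BddAbove (pVarSums p s t x) :=
  ⟨sSup (pVarSums p 0 T x), fun _ hw => pvs_le_big hp hs hst htT hfin hw⟩

lemma pvs_mono (hp : 1 ≤ p) (hs : 0 ≤ s) (hsu : s ≤ u) (huv : u ≤ v) (hvt : v ≤ t)
    (htT : t ≤ T) (hfin : HasFinitePVariation p 0 T x) :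
    sSup (pVarSums p u v x) ≤ sSup (pVarSums p s t x) := by
  refine csSup_le (pvs_nonempty huv) fun w hw => ?_
  have hmem : ‖x u - x s‖ ^ p + w + ‖x t - x v‖ ^ p ∈ pVarSums p s t x :=
    pvs_concat (pvs_concat (pvs_single hsu) hw) (pvs_single hvt)
  have := le_csSup (pvs_bdd hp hs (le_trans hsu (le_trans huv hvt)) htT hfin) hmem
  have n1 : (0:ℝ) ≤ ‖x u - x s‖ ^ p := Real.rpow_nonneg (norm_nonneg _) _
  have n2 : (0:ℝ) ≤ ‖x t - x v‖ ^ p := Real.rpow_nonneg (norm_nonneg _) _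
  linarith

lemma pvs_superadd (hp : 1 ≤ p) (hs : 0 ≤ s) (hsm : s ≤ m) (hmt : m ≤ t) (htT : t ≤ T)
    (hfin : HasFinitePVariation p 0 T x) :
    sSup (pVarSums p s m x) + sSup (pVarSums p m t x) ≤ sSup (pVarSums p s t x) := by
  have hbdd := pvs_bdd hp hs (hsm.trans hmt) htT hfin
  have key : ∀ w ∈ pVarSums p s m x, ∀ w' ∈ pVarSums p m t x,
      w + w' ≤ sSup (pVarSums p s t x) := fun w hw w' hw' =>
    le_csSup hbdd (pvs_concat hw hw')
  have h1 : sSup (pVarSums p s m x) ≤ sSup (pVarSums p s t x) - sSup (pVarSums p m t x) := by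
    refine csSup_le (pvs_nonempty hsm) fun w hw => ?_
    have h2 : sSup (pVarSums p m t x) ≤ sSup (pVarSums p s t x) - w := by
      refine csSup_le (pvs_nonempty hmt) fun w' hw' => ?_
      have := key w hw w' hw'
      linarith
    linarith
  linarith

lemma pvs_diag (hp : 1 ≤ p) (c : ℝ) : sSup (pVarSums p c c x) = 0 := by
  have hset : pVarSums p c c x = {0} := by
    ext v
    constructor
    · rintro ⟨n, t, h0, hn, hm, rfl⟩
      have hti : ∀ i ≤ n, t i = c := fun i hi =>
        le_antisymm (hn ▸ pvs_chain hm i n hi le_rfl) (h0 ▸ pvs_chain hm 0 i (Nat.zero_le _) hi)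
      simp only [Set.mem_singleton_iff]
      refine Finset.sum_eq_zero fun i hi => ?_
      simp only [Finset.mem_range] at hi
      rw [hti i (by omega), hti (i+1) (by omega), sub_self, norm_zero]
      exact Real.zero_rpow (by linarith)
    · rintro rfl
      exact ⟨0, fun _ => c, rfl, rfl, fun i hi => absurd hi (Nat.not_lt_zero i), by simp⟩
  rw [hset, csSup_singleton]

lemma rpow_lipschitz (hp : 1 ≤ p) {R c d : ℝ} (hc : 0 ≤ c) (hd : 0 ≤ d) (hcR : c ≤ R)
    (hdR : d ≤ R) : |d ^ p - c ^ p| ≤ p * R ^ (p - 1) * |d - c| := by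
  have key := Convex.norm_image_sub_le_of_norm_hasDerivWithin_le
    (f := fun y : ℝ => y ^ p) (f' := fun y : ℝ => p * y ^ (p - 1)) (s := Set.Icc 0 R)
    (fun y _ => (Real.hasDerivAt_rpow_const (Or.inr hp)).hasDerivWithinAt)
    (fun y hy => by
      rw [Real.norm_eq_abs,
        abs_of_nonneg (mul_nonneg (by linarith) (Real.rpow_nonneg hy.1 _))]
      exact mul_le_mul_of_nonneg_left
        (Real.rpow_le_rpow hy.1 hy.2 (by linarith)) (by linarith))
    (convex_Icc 0 R) ⟨hc, hcR⟩ ⟨hd, hdR⟩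
  simpa [Real.norm_eq_abs] using key

lemma pvs_reverse_subset (c : ℝ) :
    pVarSums p a b x ⊆ pVarSums p (c - b) (c - a) (fun u => x (c - u)) := by
  rintro v ⟨n, t, h0, hn, hm, rfl⟩
  refine ⟨n, fun i => c - t (n - i), by simp [hn], by simp [h0], ?_, ?_⟩
  · intro i hi
    have := hm (n - (i + 1)) (by omega)
    rw [show n - (i+1) + 1 = n - i from by omega] at this
    simp only
    linarith
  · rw [← Finset.sum_range_reflect (fun j => ‖x (t (j + 1)) - x (t j)‖ ^ p) n]
    refine Finset.sum_congr rfl fun i hi => ?_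
    simp only [Finset.mem_range] at hi
    simp only
    rw [sub_sub_cancel, sub_sub_cancel,
      show n - 1 - i + 1 = n - i from by omega, show n - 1 - i = n - (i + 1) from by omega,
      norm_sub_rev]

lemma pvs_reverse_eq (c : ℝ) :
    pVarSums p a b x = pVarSums p (c - b) (c - a) (fun u => x (c - u)) := by
  refine subset_antisymm (pvs_reverse_subset c) ?_
  have h2 := pvs_reverse_subset (p := p) (a := c - b) (b := c - a)
    (x := fun u => x (c - u)) c
  simpa [sub_sub_cancel] using h2

end helpers2

section helpers3
variable {E : Type*} [NormedAddCommGroup E] {p T : ℝ} {x : ℝ → E}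

lemma pvs_trim_left (hp : 1 ≤ p) {M K : ℝ}
    (hM : ∀ u ∈ Set.Icc (0:ℝ) T, ∀ v ∈ Set.Icc (0:ℝ) T, ‖x u - x v‖ ≤ M)
    (hK : K = p * (M + 1) ^ (p - 1))
    (hfin : HasFinitePVariation p 0 T x)
    {s a b θ : ℝ} (hs : 0 ≤ s) (hsa : s ≤ a) (hab : a ≤ b) (hbT : b ≤ T)
    (hθ0 : 0 ≤ θ) (hθ1 : θ ≤ 1) (hθ : ∀ u ∈ Set.Icc s a, ‖x a - x u‖ ≤ θ) :
    sSup (pVarSums p s b x) ≤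
      sSup (pVarSums p s a x) + sSup (pVarSums p a b x) + K * θ := by
  classical
  have hM0 : 0 ≤ M := le_trans (norm_nonneg _) (hM 0 ⟨le_rfl, by linarith⟩ 0 ⟨le_rfl, by linarith⟩)
  have hK0 : 0 ≤ K := by
    rw [hK]; exact mul_nonneg (by linarith) (Real.rpow_nonneg (by linarith) _)
  refine csSup_le (pvs_nonempty (hsa.trans hab)) fun w hw => ?_
  obtain ⟨n, t, h0, hn, hm, rfl⟩ := hw
  set j := Nat.findGreatest (fun i => t i ≤ a) n with hj
  have hjn : j ≤ n := Nat.findGreatest_le n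
  have hja : t j ≤ a := Nat.findGreatest_spec (P := fun i => t i ≤ a) (Nat.zero_le n) (by show t 0 ≤ a; rw [h0]; exact hsa)
  have hgt : ∀ i, j < i → i ≤ n → a < t i := fun i h1 h2 =>
    lt_of_not_ge (Nat.findGreatest_is_greatest h1 h2)
  have hchain := pvs_chain hm
  have hts : ∀ i ≤ n, s ≤ t i := fun i hi => h0 ▸ hchain 0 i (Nat.zero_le _) hi
  have htb : ∀ i ≤ n, t i ≤ b := fun i hi => hn ▸ hchain i n hi le_rfl
  by_cases hcase : j = n
  · -- then b ≤ a, so a = b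
    have hba : b = a := le_antisymm (by rw [← hn, ← hcase]; exact hja) hab
    have hmem : (∑ i ∈ Finset.range n, ‖x (t (i + 1)) - x (t i)‖ ^ p) ∈ pVarSums p s a x :=
      ⟨n, t, h0, by rw [hn, hba], hm, rfl⟩
    have h1 := le_csSup (pvs_bdd hp hs hsa (hab.trans hbT) hfin) hmem
    have h2 : (0:ℝ) ≤ sSup (pVarSums p a b x) := pvs_sSup_nonneg hp
    nlinarith
  · have hjn' : j < n := lt_of_le_of_ne hjn hcase
    set g : ℕ → ℝ := fun i => ‖x (t (i + 1)) - x (t i)‖ ^ p with hg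
    -- left element
    have hwL : (∑ i ∈ Finset.range j, g i) + ‖x a - x (t j)‖ ^ p ∈ pVarSums p s a x := by
      refine ⟨j + 1, fun i => if i ≤ j then t i else a, by simp [h0], by simp, ?_, ?_⟩
      · intro i hi
        by_cases h1 : i < j
        · simp only [show i ≤ j from by omega, if_pos, show i + 1 ≤ j from by omega, if_true]
          exact hm i (by omega)
        · have hij : i = j := by omega
          beta_reduce; rw [if_pos (show i ≤ j from by omega), if_neg (show ¬ (i + 1 ≤ j) from by omega), hij]
          exact hja
      · rw [Finset.sum_range_succ]
        congr 1
        · refine Finset.sum_congr rfl fun i hi => ?_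
          simp only [Finset.mem_range] at hi
          simp only [hg, show i ≤ j from by omega, if_pos, show i + 1 ≤ j from by omega, if_true]
        · beta_reduce; rw [if_neg (show ¬ (j + 1 ≤ j) from by omega), if_pos (le_refl j)]
    -- right element
    have hwR : (∑ i ∈ Finset.range (n - j - 1), g (j + 1 + i)) + ‖x (t (j + 1)) - x a‖ ^ p
        ∈ pVarSums p a b x := by
      refine ⟨n - j, fun i => if i = 0 then a else t (j + i), by simp, ?_, ?_, ?_⟩
      · beta_reduce; rw [if_neg (show ¬ (n - j = 0) from by omega), show j + (n - j) = n from by omega, hn]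
      · intro i hi
        by_cases h1 : i = 0
        · subst h1
          beta_reduce; rw [if_pos rfl, if_neg (show ¬ ((0:ℕ) + 1 = 0) from by omega)]
          rw [show j + (0 + 1) = j + 1 from by omega]
          exact le_of_lt (hgt (j + 1) (by omega) (by omega))
        · beta_reduce; rw [if_neg h1, if_neg (show ¬ (i + 1 = 0) from by omega)]
          rw [show j + (i + 1) = (j + i) + 1 from by omega]
          exact hm (j + i) (by omega)
      · rw [show n - j = (n - j - 1) + 1 from by omega, Finset.sum_range_succ']
        congr 1
        · refine Finset.sum_congr rfl fun i hi => ?_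
          beta_reduce; rw [if_neg (show ¬ (i + 1 + 1 = 0) from by omega), if_neg (show ¬ (i + 1 = 0) from by omega),
            show j + (i + 1 + 1) = (j + 1 + i) + 1 from by omega,
            show j + (i + 1) = j + 1 + i from by omega]
    -- crossing estimate
    have hcross : g j ≤ ‖x (t (j + 1)) - x a‖ ^ p + K * θ := by
      set A := ‖x (t (j + 1)) - x a‖ with hA
      set B := ‖x (t (j + 1)) - x (t j)‖ with hB
      have htri : B ≤ A + θ := by
        have h1 : B ≤ A + ‖x a - x (t j)‖ := by
          have : x (t (j + 1)) - x (t j) = (x (t (j + 1)) - x a) + (x a - x (t j)) := by abel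
          rw [hB, this]
          exact norm_add_le _ _
        have h2 : ‖x a - x (t j)‖ ≤ θ := hθ (t j) ⟨hts j hjn, hja⟩
        linarith
      have hAM : A ≤ M := hM _ ⟨le_trans hs (hts _ hjn'), le_trans (htb _ hjn') hbT⟩ _
        ⟨by linarith, by linarith⟩
      have hA0 : 0 ≤ A := norm_nonneg _
      have hlip := rpow_lipschitz hp (R := M + 1) hA0 (by linarith : (0:ℝ) ≤ A + θ)
        (by linarith) (by linarith)
      have h3 : (A + θ) ^ p - A ^ p ≤ K * θ := by
        have := le_trans (le_abs_self _) hlip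
        rw [show A + θ - A = θ from by ring, abs_of_nonneg hθ0, ← hK] at this
        exact this
      have h4 : B ^ p ≤ (A + θ) ^ p := Real.rpow_le_rpow (norm_nonneg _) htri (by linarith)
      simp only [hg]
      linarith
    -- split the sum
    have hsplit : (∑ i ∈ Finset.range n, g i)
        = (∑ i ∈ Finset.range j, g i) + g j + ∑ i ∈ Finset.range (n - j - 1), g (j + 1 + i) := by
      calc (∑ i ∈ Finset.range n, g i)
          = ∑ i ∈ Finset.range ((j + 1) + (n - j - 1)), g i := by
            rw [show (j + 1) + (n - j - 1) = n from by omega]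
        _ = _ := by rw [Finset.sum_range_add, Finset.sum_range_succ]
    have hL := le_csSup (pvs_bdd hp hs hsa (hab.trans hbT) hfin) hwL
    have hR := le_csSup (pvs_bdd hp (hs.trans hsa) hab hbT hfin) hwR
    have hn1 : (0:ℝ) ≤ ‖x a - x (t j)‖ ^ p := Real.rpow_nonneg (norm_nonneg _) _
    rw [hsplit]
    linarith
end helpers3
lemma pvs_rev_sSup (c : ℝ) {p a b : ℝ} {E : Type*} [NormedAddCommGroup E] {x : ℝ → E} :
    sSup (pVarSums p a b x) = sSup (pVarSums p (c - b) (c - a) (fun u => x (c - u))) := by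
  rw [← pvs_reverse_eq c]

section helpers4
variable {E : Type*} [NormedAddCommGroup E] {p T : ℝ} {x : ℝ → E}

lemma pvs_trim_right (hp : 1 ≤ p) {M K : ℝ}
    (hM : ∀ u ∈ Set.Icc (0:ℝ) T, ∀ v ∈ Set.Icc (0:ℝ) T, ‖x u - x v‖ ≤ M)
    (hK : K = p * (M + 1) ^ (p - 1))
    (hfin : HasFinitePVariation p 0 T x)
    {a b t θ : ℝ} (ha : 0 ≤ a) (hab : a ≤ b) (hbt : b ≤ t) (htT : t ≤ T)
    (hθ0 : 0 ≤ θ) (hθ1 : θ ≤ 1) (hθ : ∀ u ∈ Set.Icc b t, ‖x b - x u‖ ≤ θ) :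
    sSup (pVarSums p a t x) ≤
      sSup (pVarSums p a b x) + sSup (pVarSums p b t x) + K * θ := by
  set y : ℝ → E := fun u => x (T - u) with hy
  have hmem : ∀ u ∈ Set.Icc (0:ℝ) T, T - u ∈ Set.Icc (0:ℝ) T := fun u hu =>
    ⟨by linarith [hu.2], by linarith [hu.1]⟩
  have hMy : ∀ u ∈ Set.Icc (0:ℝ) T, ∀ v ∈ Set.Icc (0:ℝ) T, ‖y u - y v‖ ≤ M := fun u hu v hv =>
    hM _ (hmem u hu) _ (hmem v hv)
  have hfiny : HasFinitePVariation p 0 T y := by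
    unfold HasFinitePVariation
    have : pVarSums p 0 T x = pVarSums p (T - T) (T - 0) y := pvs_reverse_eq T
    simp only [sub_self, sub_zero] at this
    rw [← this]
    exact hfin
  have hθy : ∀ u ∈ Set.Icc (T - t) (T - b), ‖y (T - b) - y u‖ ≤ θ := by
    intro u hu
    show ‖x (T - (T - b)) - x (T - u)‖ ≤ θ
    rw [sub_sub_cancel]
    exact hθ (T - u) ⟨by linarith [hu.2], by linarith [hu.1]⟩
  have key := pvs_trim_left hp hMy hK hfiny (s := T - t) (a := T - b) (b := T - a)
    (by linarith) (by linarith) (by linarith) (by linarith) hθ0 hθ1 hθy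
  have e1 : sSup (pVarSums p a t x) = sSup (pVarSums p (T - t) (T - a) y) := pvs_rev_sSup T
  have e2 : sSup (pVarSums p b t x) = sSup (pVarSums p (T - t) (T - b) y) := pvs_rev_sSup T
  have e3 : sSup (pVarSums p a b x) = sSup (pVarSums p (T - b) (T - a) y) := pvs_rev_sSup T
  rw [e1, e2, e3]
  linarith
end helpers4
section helpers5
variable {E : Type*} [NormedAddCommGroup E] {p T : ℝ} {x : ℝ → E}

lemma pvs_right_small (hp : 1 ≤ p) {M K : ℝ}
    (hx : ContinuousOn x (Set.Icc 0 T))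
    (hM : ∀ u ∈ Set.Icc (0:ℝ) T, ∀ v ∈ Set.Icc (0:ℝ) T, ‖x u - x v‖ ≤ M)
    (hK : K = p * (M + 1) ^ (p - 1))
    (hfin : HasFinitePVariation p 0 T x)
    {s : ℝ} (hs0 : 0 ≤ s) (hsT : s < T) {ε : ℝ} (hε : 0 < ε) :
    ∃ v, s < v ∧ v ≤ T ∧ sSup (pVarSums p s v x) ≤ ε := by
  classical
  by_contra hcon
  push_neg at hcon
  have hM0 : 0 ≤ M := le_trans (norm_nonneg _)
    (hM 0 ⟨le_rfl, by linarith⟩ 0 ⟨le_rfl, by linarith⟩)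
  have hK0 : 0 < K := by
    rw [hK]
    exact mul_pos (by linarith) (Real.rpow_pos_of_pos (by linarith) _)
  -- peeling step
  have peel : ∀ v, s < v → v ≤ T → ∃ w, s < w ∧ w ≤ v ∧
      ε / 2 ≤ sSup (pVarSums p w v x) := by
    intro v hv hvT
    have hSv : ε < sSup (pVarSums p s v x) := hcon v hv hvT
    obtain ⟨Sum, hSummem, hSum⟩ :=
      exists_lt_of_lt_csSup (pvs_nonempty hv.le)
        (show 3 * ε / 4 < sSup (pVarSums p s v x) by linarith)
    obtain ⟨n, t, h0, hn, hm, rfl⟩ := hSummem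
    have hchain := pvs_chain hm
    have hPn : s < t n := hn ▸ hv
    have hex : ∃ i, s < t i := ⟨n, hPn⟩
    set j := Nat.find hex with hj
    have hPj : s < t j := Nat.find_spec hex
    have hjle : j ≤ n := Nat.find_le hPn
    have hmin : ∀ i < j, ¬ s < t i := fun i hi => Nat.find_min _ hi
    have hj1 : 1 ≤ j := by
      rcases Nat.eq_zero_or_pos j with h | h
      · exfalso; rw [h, h0] at hPj; exact lt_irrefl s hPj
      · exact h
    have hteq : ∀ i < j, t i = s := fun i hi =>
      le_antisymm (not_lt.1 (hmin i hi)) (h0 ▸ hchain 0 i (Nat.zero_le i) (by omega))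
    -- continuity at s
    have hsmem : s ∈ Set.Icc (0:ℝ) T := ⟨hs0, hsT.le⟩
    obtain ⟨δ, hδ0, hδ⟩ := Metric.continuousWithinAt_iff.1 (hx s hsmem) (ε / (4 * K))
      (by positivity)
    set w := min (t j) (s + δ / 2) with hw
    have hsw : s < w := lt_min hPj (by linarith)
    have hwj : w ≤ t j := min_le_left _ _
    have hjv : t j ≤ v := hn ▸ hchain j n hjle le_rfl
    have hwv : w ≤ v := hwj.trans hjv
    have hwT : w ≤ T := hwv.trans hvT
    have hwmem : w ∈ Set.Icc (0:ℝ) T := ⟨by linarith, hwT⟩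
    have hxw : ‖x w - x s‖ < ε / (4 * K) := by
      have := hδ hwmem (show dist w s < δ by
        rw [Real.dist_eq, abs_of_nonneg (by linarith)]
        have : w ≤ s + δ / 2 := min_le_right _ _
        linarith)
      rwa [dist_eq_norm] at this
    -- new subdivision
    set g : ℕ → ℝ := fun i => ‖x (t (i + 1)) - x (t i)‖ ^ p with hg
    have hmemw : (∑ i ∈ Finset.range (n - j), g (j + i)) + ‖x (t j) - x w‖ ^ p
        ∈ pVarSums p w v x := by
      refine ⟨n - j + 1, fun i => if i = 0 then w else t (j + i - 1), by simp, ?_, ?_, ?_⟩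
      · beta_reduce
        rw [if_neg (show ¬ (n - j + 1 = 0) from by omega),
          show j + (n - j + 1) - 1 = n from by omega, hn]
      · intro i hi
        by_cases h1 : i = 0
        · subst h1
          beta_reduce
          rw [if_pos rfl, if_neg (show ¬ ((0:ℕ) + 1 = 0) from by omega),
            show j + (0 + 1) - 1 = j from by omega]
          exact hwj
        · beta_reduce
          rw [if_neg h1, if_neg (show ¬ (i + 1 = 0) from by omega),
            show j + (i + 1) - 1 = (j + i - 1) + 1 from by omega]
          exact hm (j + i - 1) (by omega)
      · rw [Finset.sum_range_succ']
        congr 1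
    -- original sum decomposition
    have hsplit : (∑ i ∈ Finset.range n, g i)
        = ‖x (t j) - x s‖ ^ p + ∑ i ∈ Finset.range (n - j), g (j + i) := by
      calc (∑ i ∈ Finset.range n, g i)
          = ∑ i ∈ Finset.range (j + (n - j)), g i := by
            rw [show j + (n - j) = n from by omega]
        _ = (∑ i ∈ Finset.range j, g i) + ∑ i ∈ Finset.range (n - j), g (j + i) :=
            Finset.sum_range_add g j (n - j)
        _ = ‖x (t j) - x s‖ ^ p + ∑ i ∈ Finset.range (n - j), g (j + i) := by
            congr 1
            rw [Finset.sum_eq_single_of_mem (j - 1)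
              (Finset.mem_range.2 (by omega))]
            · simp only [hg]
              rw [show j - 1 + 1 = j from by omega, hteq (j - 1) (by omega)]
            · intro i hi hij
              simp only [Finset.mem_range] at hi
              simp only [hg]
              rw [hteq i (by omega), hteq (i + 1) (by omega), sub_self, norm_zero]
              exact Real.zero_rpow (by linarith)
    -- Lipschitz comparison
    have hlipAB : ‖x (t j) - x s‖ ^ p - ‖x (t j) - x w‖ ^ p ≤ ε / 4 := by
      have htjmem : t j ∈ Set.Icc (0:ℝ) T := ⟨by linarith, hjv.trans hvT⟩
      have hAM : ‖x (t j) - x s‖ ≤ M := hM _ htjmem _ hsmem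
      have hBM : ‖x (t j) - x w‖ ≤ M := hM _ htjmem _ hwmem
      have hlip := rpow_lipschitz hp (R := M + 1) (norm_nonneg (x (t j) - x w))
        (norm_nonneg (x (t j) - x s)) (by linarith) (by linarith)
      have habs : |‖x (t j) - x s‖ - ‖x (t j) - x w‖| ≤ ‖x w - x s‖ := by
        have h := abs_norm_sub_norm_le (x (t j) - x s) (x (t j) - x w)
        rwa [show (x (t j) - x s) - (x (t j) - x w) = x w - x s from by abel] at h
      have h1 : ‖x (t j) - x s‖ ^ p - ‖x (t j) - x w‖ ^ p ≤ K * ‖x w - x s‖ := by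
        have h2 := le_trans (le_abs_self _) hlip
        have h3 : K * |‖x (t j) - x s‖ - ‖x (t j) - x w‖| ≤ K * ‖x w - x s‖ :=
          mul_le_mul_of_nonneg_left habs (le_of_lt hK0)
        rw [hK] at h3 ⊢
        linarith
      have h4 : K * ‖x w - x s‖ ≤ K * (ε / (4 * K)) :=
        mul_le_mul_of_nonneg_left hxw.le (le_of_lt hK0)
      have h5 : K * (ε / (4 * K)) = ε / 4 := by
        field_simp
      linarith
    refine ⟨w, hsw, hwv, ?_⟩
    refine le_trans ?_ (le_csSup (pvs_bdd hp (by linarith : (0:ℝ) ≤ w) hwv hvT hfin) hmemw)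
    rw [hsplit] at hSum
    linarith
  -- recursion
  have key : ∀ v : {v : ℝ // s < v ∧ v ≤ T}, ∃ w : {v : ℝ // s < v ∧ v ≤ T},
      w.1 ≤ v.1 ∧ ε / 2 ≤ sSup (pVarSums p w.1 v.1 x) := by
    rintro ⟨v, hv1, hv2⟩
    obtain ⟨w, h1, h2, h3⟩ := peel v hv1 hv2
    exact ⟨⟨w, h1, h2.trans hv2⟩, h2, h3⟩
  choose F hF1 hF2 using key
  set v₀ : {v : ℝ // s < v ∧ v ≤ T} := ⟨T, hsT, le_rfl⟩ with hv₀
  set seq : ℕ → {v : ℝ // s < v ∧ v ≤ T} := fun k => F^[k] v₀ with hseq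
  have hseq0 : seq 0 = v₀ := rfl
  have hseq_succ : ∀ k, seq (k + 1) = F (seq k) := fun k =>
    Function.iterate_succ_apply' F k v₀
  have grow : ∀ N : ℕ, (N : ℝ) * (ε / 2) ≤ sSup (pVarSums p (seq N).1 T x) := by
    intro N
    induction N with
    | zero =>
        simp only [Nat.cast_zero, zero_mul, hseq0]
        exact pvs_sSup_nonneg hp
    | succ N ih =>
        have h2 := hF2 (seq N)
        rw [← hseq_succ N] at h2
        have hsup : sSup (pVarSums p (seq (N+1)).1 (seq N).1 x)
            + sSup (pVarSums p (seq N).1 T x) ≤ sSup (pVarSums p (seq (N+1)).1 T x) := by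
          refine pvs_superadd hp (by linarith [(seq (N+1)).2.1]) ?_ (seq N).2.2 le_rfl hfin
          rw [hseq_succ N]; exact hF1 (seq N)
        push_cast
        linarith
  obtain ⟨N, hN⟩ := exists_nat_gt (sSup (pVarSums p 0 T x) / (ε / 2))
  have hmono : sSup (pVarSums p (seq N).1 T x) ≤ sSup (pVarSums p 0 T x) :=
    pvs_mono hp le_rfl (by linarith [(seq N).2.1]) (seq N).2.2 le_rfl le_rfl hfin
  have hgrow := grow N
  have : sSup (pVarSums p 0 T x) < (N : ℝ) * (ε / 2) := by
    rw [div_lt_iff₀ (by linarith : (0:ℝ) < ε / 2)] at hN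
    linarith
  linarith
end helpers5
section helpers6
variable {E : Type*} [NormedAddCommGroup E] {p T : ℝ} {x : ℝ → E}

lemma pvs_left_small (hp : 1 ≤ p) {M K : ℝ}
    (hx : ContinuousOn x (Set.Icc 0 T))
    (hM : ∀ u ∈ Set.Icc (0:ℝ) T, ∀ v ∈ Set.Icc (0:ℝ) T, ‖x u - x v‖ ≤ M)
    (hK : K = p * (M + 1) ^ (p - 1))
    (hfin : HasFinitePVariation p 0 T x)
    {s : ℝ} (hs0 : 0 < s) (hsT : s ≤ T) {ε : ℝ} (hε : 0 < ε) :
    ∃ u, 0 ≤ u ∧ u < s ∧ sSup (pVarSums p u s x) ≤ ε := by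
  set y : ℝ → E := fun u => x (T - u) with hy
  have hmem : ∀ u ∈ Set.Icc (0:ℝ) T, T - u ∈ Set.Icc (0:ℝ) T := fun u hu =>
    ⟨by linarith [hu.2], by linarith [hu.1]⟩
  have hxy : ContinuousOn y (Set.Icc 0 T) :=
    hx.comp ((continuous_const.sub continuous_id).continuousOn) hmem
  have hMy : ∀ u ∈ Set.Icc (0:ℝ) T, ∀ v ∈ Set.Icc (0:ℝ) T, ‖y u - y v‖ ≤ M := fun u hu v hv =>
    hM _ (hmem u hu) _ (hmem v hv)
  have hfiny : HasFinitePVariation p 0 T y := by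
    unfold HasFinitePVariation
    have h := pvs_reverse_eq (p := p) (a := (0:ℝ)) (b := T) (x := x) T
    simp only [sub_self, sub_zero] at h
    rw [← h]
    exact hfin
  obtain ⟨v, hv1, hv2, hv3⟩ := pvs_right_small hp hxy hMy hK hfiny
    (s := T - s) (by linarith) (by linarith) hε
  refine ⟨T - v, by linarith, by linarith, ?_⟩
  have e : sSup (pVarSums p (T - v) s x) = sSup (pVarSums p (T - s) v y) := by
    have := pvs_rev_sSup (c := T) (p := p) (a := T - v) (b := s) (x := x)
    rw [this, show T - (T - v) = v from by ring]
  rw [e]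
  exact hv3

lemma pvs_nbhd_left (hp : 1 ≤ p) {M K : ℝ}
    (hx : ContinuousOn x (Set.Icc 0 T))
    (hM : ∀ u ∈ Set.Icc (0:ℝ) T, ∀ v ∈ Set.Icc (0:ℝ) T, ‖x u - x v‖ ≤ M)
    (hK : K = p * (M + 1) ^ (p - 1))
    (hfin : HasFinitePVariation p 0 T x)
    {s₀ : ℝ} (hs₀ : s₀ ∈ Set.Icc (0:ℝ) T) {ε : ℝ} (hε : 0 < ε) :
    ∃ δ > 0, ∀ u v, 0 ≤ u → u ≤ v → v ≤ s₀ → s₀ - δ < u →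
      sSup (pVarSums p u v x) ≤ ε := by
  rcases eq_or_lt_of_le hs₀.1 with h0 | h0
  · refine ⟨1, one_pos, fun u v hu huv hv _ => ?_⟩
    have huv' : u = v := le_antisymm huv (by linarith)
    rw [← huv', pvs_diag hp]
    exact hε.le
  · obtain ⟨c, hc0, hcs, hcε⟩ := pvs_left_small hp hx hM hK hfin h0 hs₀.2 hε
    refine ⟨s₀ - c, by linarith, fun u v hu huv hv hlt => ?_⟩
    exact le_trans (pvs_mono hp hc0 (by linarith) huv hv hs₀.2 hfin) hcε

lemma pvs_nbhd_right (hp : 1 ≤ p) {M K : ℝ}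
    (hx : ContinuousOn x (Set.Icc 0 T))
    (hM : ∀ u ∈ Set.Icc (0:ℝ) T, ∀ v ∈ Set.Icc (0:ℝ) T, ‖x u - x v‖ ≤ M)
    (hK : K = p * (M + 1) ^ (p - 1))
    (hfin : HasFinitePVariation p 0 T x)
    {s₀ : ℝ} (hs₀ : s₀ ∈ Set.Icc (0:ℝ) T) {ε : ℝ} (hε : 0 < ε) :
    ∃ δ > 0, ∀ u v, s₀ ≤ u → u ≤ v → v ≤ T → v < s₀ + δ →
      sSup (pVarSums p u v x) ≤ ε := by
  rcases eq_or_lt_of_le hs₀.2 with h0 | h0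
  · refine ⟨1, one_pos, fun u v hu huv hv _ => ?_⟩
    have huv' : u = v := le_antisymm huv (by rw [h0] at hu; linarith)
    rw [← huv', pvs_diag hp]
    exact hε.le
  · obtain ⟨c, hc1, hc2, hcε⟩ := pvs_right_small hp hx hM hK hfin hs₀.1 h0 hε
    refine ⟨c - s₀, by linarith, fun u v hu huv hv hlt => ?_⟩
    exact le_trans (pvs_mono hp hs₀.1 hu huv (by linarith) hc2 hfin) hcε

end helpers6

/-- A control on `[0,T]`: a continuous, superadditive, nonnegative function on the
simplex `Δ_{[0,T]} = {(s,t) : 0 ≤ s ≤ t ≤ T}` vanishing on the diagonal. -/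
def IsControl (T : ℝ) (ω : ℝ → ℝ → ℝ) : Prop :=
  ContinuousOn (fun q : ℝ × ℝ => ω q.1 q.2)
      {q : ℝ × ℝ | 0 ≤ q.1 ∧ q.1 ≤ q.2 ∧ q.2 ≤ T} ∧
  (∀ s u t : ℝ, 0 ≤ s → s ≤ u → u ≤ t → t ≤ T → ω s u + ω u t ≤ ω s t) ∧
  (∀ t : ℝ, 0 ≤ t → t ≤ T → ω t t = 0) ∧
  (∀ s t : ℝ, 0 ≤ s → s ≤ t → t ≤ T → 0 ≤ ω s t)

/-- For a continuous path `x` of finite `p`-variation on `[0,T]`, the function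
`ω(s,t) = ‖x‖_{p,[s,t]}^p` is a control. -/
theorem statement4 (p T : ℝ) (hp : 1 ≤ p) (hT : 0 < T)
    (E : Type*) [NormedAddCommGroup E]
    (x : ℝ → E) (hcont : ContinuousOn x (Set.Icc 0 T))
    (hfin : HasFinitePVariation p 0 T x) :
    IsControl T (fun s t => pVar p s t x ^ p) := by
  have hp0 : p ≠ 0 := by intro h; rw [h] at hp; linarith
  have hT0 : (0:ℝ) ≤ T := hT.le
  have hω : ∀ s t : ℝ, pVar p s t x ^ p = sSup (pVarSums p s t x) := by
    intro s t
    rw [pVar, ← Real.rpow_mul (pvs_sSup_nonneg hp), one_div, inv_mul_cancel₀ hp0,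
      Real.rpow_one]
  obtain ⟨C, hC⟩ := IsCompact.exists_bound_of_continuousOn isCompact_Icc hcont
  set M := C + C with hMdef
  have hM : ∀ u ∈ Set.Icc (0:ℝ) T, ∀ v ∈ Set.Icc (0:ℝ) T, ‖x u - x v‖ ≤ M := by
    intro u hu v hv
    calc ‖x u - x v‖ ≤ ‖x u‖ + ‖x v‖ := norm_sub_le _ _
      _ ≤ C + C := add_le_add (hC u hu) (hC v hv)
  set K := p * (M + 1) ^ (p - 1) with hKdef
  have hM0 : 0 ≤ M := le_trans (norm_nonneg _) (hM 0 ⟨le_rfl, hT0⟩ 0 ⟨le_rfl, hT0⟩)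
  have hK0 : 0 < K := mul_pos (by linarith) (Real.rpow_pos_of_pos (by linarith) _)
  refine ⟨?_, ?_, ?_, ?_⟩
  · -- continuity
    simp only [hω]
    rw [Metric.continuousOn_iff]
    rintro ⟨s₀, t₀⟩ ⟨hq1, hq2, hq3⟩ ε hε
    dsimp only at hq1 hq2 hq3
    have hε8 : (0:ℝ) < ε / 8 := by linarith
    set ρ := min (ε / (16 * K)) (1 / 2) with hρdef
    have hρ0 : 0 < ρ := lt_min (by positivity) (by norm_num)
    have hρhalf : ρ ≤ 1 / 2 := min_le_right _ _
    have hKρ : K * ρ ≤ ε / 16 := by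
      have h1 : ρ ≤ ε / (16 * K) := min_le_left _ _
      have h2 : K * ρ ≤ K * (ε / (16 * K)) := mul_le_mul_of_nonneg_left h1 hK0.le
      have h3 : K * (ε / (16 * K)) = ε / 16 := by field_simp
      linarith
    have hKρ2 : K * (2 * ρ) = 2 * (K * ρ) := by ring
    have hs₀mem : s₀ ∈ Set.Icc (0:ℝ) T := ⟨hq1, hq2.trans hq3⟩
    have ht₀mem : t₀ ∈ Set.Icc (0:ℝ) T := ⟨hq1.trans hq2, hq3⟩
    obtain ⟨δ₅, hδ₅0, hδ₅⟩ := Metric.continuousWithinAt_iff.1 (hcont s₀ hs₀mem) ρ hρ0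
    obtain ⟨δ₆, hδ₆0, hδ₆⟩ := Metric.continuousWithinAt_iff.1 (hcont t₀ ht₀mem) ρ hρ0
    obtain ⟨δ₁, hδ₁0, hG1⟩ := pvs_nbhd_left hp hcont hM rfl hfin hs₀mem hε8
    obtain ⟨δ₂, hδ₂0, hG2⟩ := pvs_nbhd_right hp hcont hM rfl hfin hs₀mem hε8
    obtain ⟨δ₃, hδ₃0, hG3⟩ := pvs_nbhd_left hp hcont hM rfl hfin ht₀mem hε8
    obtain ⟨δ₄, hδ₄0, hG4⟩ := pvs_nbhd_right hp hcont hM rfl hfin ht₀mem hε8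
    have hball_s : ∀ z, 0 ≤ z → z ≤ T → s₀ - δ₅ < z → z < s₀ + δ₅ → ‖x z - x s₀‖ < ρ := by
      intro z h1 h2 h3 h4
      have := hδ₅ (Set.mem_Icc.2 ⟨h1, h2⟩) (show dist z s₀ < δ₅ by
        rw [Real.dist_eq, abs_lt]; exact ⟨by linarith, by linarith⟩)
      rwa [dist_eq_norm] at this
    have hball_t : ∀ z, 0 ≤ z → z ≤ T → t₀ - δ₆ < z → z < t₀ + δ₆ → ‖x z - x t₀‖ < ρ := by
      intro z h1 h2 h3 h4
      have := hδ₆ (Set.mem_Icc.2 ⟨h1, h2⟩) (show dist z t₀ < δ₆ by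
        rw [Real.dist_eq, abs_lt]; exact ⟨by linarith, by linarith⟩)
      rwa [dist_eq_norm] at this
    have hpair_s : ∀ y z, 0 ≤ y → y ≤ T → s₀ - δ₅ < y → y < s₀ + δ₅ →
        0 ≤ z → z ≤ T → s₀ - δ₅ < z → z < s₀ + δ₅ → ‖x y - x z‖ ≤ 2 * ρ := by
      intro y z a1 a2 a3 a4 b1 b2 b3 b4
      have h1 := hball_s y a1 a2 a3 a4
      have h2 := hball_s z b1 b2 b3 b4
      calc ‖x y - x z‖ ≤ ‖x y - x s₀‖ + ‖x s₀ - x z‖ := by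
            have e : x y - x z = (x y - x s₀) + (x s₀ - x z) := by abel
            rw [e]; exact norm_add_le _ _
        _ ≤ 2 * ρ := by rw [norm_sub_rev (x s₀)]; linarith
    have hpair_t : ∀ y z, 0 ≤ y → y ≤ T → t₀ - δ₆ < y → y < t₀ + δ₆ →
        0 ≤ z → z ≤ T → t₀ - δ₆ < z → z < t₀ + δ₆ → ‖x y - x z‖ ≤ 2 * ρ := by
      intro y z a1 a2 a3 a4 b1 b2 b3 b4
      have h1 := hball_t y a1 a2 a3 a4
      have h2 := hball_t z b1 b2 b3 b4
      calc ‖x y - x z‖ ≤ ‖x y - x t₀‖ + ‖x t₀ - x z‖ := by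
            have e : x y - x z = (x y - x t₀) + (x t₀ - x z) := by abel
            rw [e]; exact norm_add_le _ _
        _ ≤ 2 * ρ := by rw [norm_sub_rev (x t₀)]; linarith
    rcases eq_or_lt_of_le hq2 with heq | hlt
    · -- diagonal case s₀ = t₀
      subst heq
      set δ := min (min δ₁ δ₂) δ₅ with hδdef
      have hδ0 : 0 < δ := lt_min (lt_min hδ₁0 hδ₂0) hδ₅0
      have hd1 : δ ≤ δ₁ := le_trans (min_le_left _ _) (min_le_left _ _)
      have hd2 : δ ≤ δ₂ := le_trans (min_le_left _ _) (min_le_right _ _)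
      have hd5 : δ ≤ δ₅ := min_le_right _ _
      refine ⟨δ, hδ0, ?_⟩
      rintro ⟨u, v⟩ ⟨hu1, hu2, hu3⟩ hdist
      rw [Prod.dist_eq, max_lt_iff, Real.dist_eq, Real.dist_eq, abs_lt, abs_lt] at hdist
      obtain ⟨⟨hdu1, hdu2⟩, hdv1, hdv2⟩ := hdist
      rw [pvs_diag hp, dist_zero_right, Real.norm_eq_abs,
        abs_of_nonneg (pvs_sSup_nonneg hp)]
      rcases le_total v s₀ with hc1 | hc1
      · have := hG1 u v hu1 hu2 hc1 (by linarith)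
        linarith
      · rcases le_total s₀ u with hc2 | hc2
        · have := hG2 u v hc2 hu2 hu3 (by linarith)
          linarith
        · have h1 : sSup (pVarSums p u v x) ≤ sSup (pVarSums p u s₀ x)
              + sSup (pVarSums p s₀ v x) + K * (2 * ρ) :=
            pvs_trim_left hp hM rfl hfin hu1 hc2 hc1 hu3 (by positivity) (by linarith)
              (fun z hz => hpair_s s₀ z (hq1) (hq2.trans hq3) (by linarith) (by linarith)
                (by linarith [hz.1]) (le_trans hz.2 (hq2.trans hq3))
                (by linarith [hz.1]) (by linarith [hz.2]))
          have h2 := hG1 u s₀ hu1 hc2 le_rfl (by linarith)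
          have h3 := hG2 s₀ v le_rfl hc1 hu3 (by linarith)
          linarith
    · -- case s₀ < t₀
      set δ := min (min (min δ₁ δ₂) (min δ₃ δ₄)) (min (min δ₅ δ₆) ((t₀ - s₀) / 3))
        with hδdef
      have hδ0 : 0 < δ := by
        refine lt_min (lt_min (lt_min hδ₁0 hδ₂0) (lt_min hδ₃0 hδ₄0))
          (lt_min (lt_min hδ₅0 hδ₆0) (by linarith))
      have hd1 : δ ≤ δ₁ := le_trans (min_le_left _ _)
        (le_trans (min_le_left _ _) (min_le_left _ _))
      have hd2 : δ ≤ δ₂ := le_trans (min_le_left _ _)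
        (le_trans (min_le_left _ _) (min_le_right _ _))
      have hd3 : δ ≤ δ₃ := le_trans (min_le_left _ _)
        (le_trans (min_le_right _ _) (min_le_left _ _))
      have hd4 : δ ≤ δ₄ := le_trans (min_le_left _ _)
        (le_trans (min_le_right _ _) (min_le_right _ _))
      have hd5 : δ ≤ δ₅ := le_trans (min_le_right _ _)
        (le_trans (min_le_left _ _) (min_le_left _ _))
      have hd6 : δ ≤ δ₆ := le_trans (min_le_right _ _)
        (le_trans (min_le_left _ _) (min_le_right _ _))
      have hd7 : δ ≤ (t₀ - s₀) / 3 := le_trans (min_le_right _ _) (min_le_right _ _)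
      refine ⟨δ, hδ0, ?_⟩
      rintro ⟨u, v⟩ ⟨hu1, hu2, hu3⟩ hdist
      rw [Prod.dist_eq, max_lt_iff, Real.dist_eq, Real.dist_eq, abs_lt, abs_lt] at hdist
      obtain ⟨⟨hdu1, hdu2⟩, hdv1, hdv2⟩ := hdist
      set a := max u s₀ with hadef
      set b := min v t₀ with hbdef
      have hua : u ≤ a := le_max_left _ _
      have hsa : s₀ ≤ a := le_max_right _ _
      have has : a < s₀ + δ := max_lt (by linarith) (by linarith)
      have hbv : b ≤ v := min_le_left _ _
      have hbt : b ≤ t₀ := min_le_right _ _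
      have htb : t₀ - δ < b := lt_min (by linarith) (by linarith)
      have hab : a ≤ b := by linarith
      have ha0 : 0 ≤ a := le_trans hu1 hua
      have hb0 : 0 ≤ b := le_trans ha0 hab
      have hbT : b ≤ T := le_trans hbt hq3
      have haT : a ≤ T := le_trans hab hbT
      -- theta bounds near s₀
      have hθua : ∀ z ∈ Set.Icc u a, ‖x a - x z‖ ≤ 2 * ρ := fun z hz =>
        hpair_s a z ha0 haT (by linarith) (by linarith)
          (le_trans hu1 hz.1) (le_trans hz.2 haT) (by linarith [hz.1]) (by linarith [hz.2])
      have hθs₀a : ∀ z ∈ Set.Icc s₀ a, ‖x a - x z‖ ≤ 2 * ρ := fun z hz =>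
        hpair_s a z ha0 haT (by linarith) (by linarith)
          (le_trans hq1 hz.1) (le_trans hz.2 haT) (by linarith [hz.1]) (by linarith [hz.2])
      -- theta bounds near t₀
      have hθbv : ∀ z ∈ Set.Icc b v, ‖x b - x z‖ ≤ 2 * ρ := fun z hz =>
        hpair_t b z hb0 hbT (by linarith) (by linarith)
          (le_trans hb0 hz.1) (le_trans hz.2 hu3) (by linarith [hz.1]) (by linarith [hz.2])
      have hθbt₀ : ∀ z ∈ Set.Icc b t₀, ‖x b - x z‖ ≤ 2 * ρ := fun z hz =>
        hpair_t b z hb0 hbT (by linarith) (by linarith)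
          (le_trans hb0 hz.1) (le_trans hz.2 hq3) (by linarith [hz.1]) (by linarith [hz.2])
      -- upper chain
      have h1 : sSup (pVarSums p u v x) ≤ sSup (pVarSums p u a x)
          + sSup (pVarSums p a v x) + K * (2 * ρ) :=
        pvs_trim_left hp hM rfl hfin hu1 hua (hab.trans hbv) hu3
          (by positivity) (by linarith) hθua
      have h2 : sSup (pVarSums p a v x) ≤ sSup (pVarSums p a b x)
          + sSup (pVarSums p b v x) + K * (2 * ρ) :=
        pvs_trim_right hp hM rfl hfin ha0 hab hbv hu3 (by positivity) (by linarith) hθbv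
      have h3 : sSup (pVarSums p a b x) ≤ sSup (pVarSums p s₀ t₀ x) :=
        pvs_mono hp hq1 hsa hab hbt hq3 hfin
      have h4 : sSup (pVarSums p u a x) ≤ ε / 8 := by
        rcases le_total u s₀ with h | h
        · rw [show a = s₀ from max_eq_right h]
          exact hG1 u s₀ hu1 h le_rfl (by linarith)
        · rw [show a = u from max_eq_left h, pvs_diag hp]
          linarith
      have h5 : sSup (pVarSums p b v x) ≤ ε / 8 := by
        rcases le_total v t₀ with h | h
        · rw [show b = v from min_eq_left h, pvs_diag hp]
          linarith
        · rw [show b = t₀ from min_eq_right h]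
          exact hG4 t₀ v le_rfl h hu3 (by linarith)
      -- lower chain
      have h6 : sSup (pVarSums p s₀ t₀ x) ≤ sSup (pVarSums p s₀ a x)
          + sSup (pVarSums p a t₀ x) + K * (2 * ρ) :=
        pvs_trim_left hp hM rfl hfin hq1 hsa (hab.trans hbt) hq3
          (by positivity) (by linarith) hθs₀a
      have h7 : sSup (pVarSums p a t₀ x) ≤ sSup (pVarSums p a b x)
          + sSup (pVarSums p b t₀ x) + K * (2 * ρ) :=
        pvs_trim_right hp hM rfl hfin ha0 hab hbt hq3 (by positivity) (by linarith) hθbt₀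
      have h8 : sSup (pVarSums p s₀ a x) ≤ ε / 8 :=
        hG2 s₀ a le_rfl hsa haT (by linarith)
      have h9 : sSup (pVarSums p b t₀ x) ≤ ε / 8 :=
        hG3 b t₀ hb0 hbt le_rfl (by linarith)
      have h10 : sSup (pVarSums p a b x) ≤ sSup (pVarSums p u v x) :=
        pvs_mono hp hu1 hua hab hbv hu3 hfin
      rw [Real.dist_eq, abs_lt]
      constructor <;> linarith
  · intro s u t hs hsu hut htT
    simp only [hω]
    exact pvs_superadd hp hs hsu hut htT hfin
  · intro t ht htT
    simp only [hω]
    exact pvs_diag hp t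
  · intro s t hs hst htT
    simp only [hω]
    exact pvs_sSup_nonneg hp
end

section
/- Let p ≥ 1, let E and F be normed vector spaces, U a subset of E, and J a compact interval. Let f : U → F be a locally Lipschitz map (every point of U has a neighbourhood in U on which f is Lipschitz), and let x : J → U be a continuous path of finite p-variation. Then the composite path f ∘ x : J → F has finite p-variation. -/
open Finset Set

/-- If `f` is locally Lipschitz on `U` (every point of `U` has a neighbourhood in `U` on
which `f` is Lipschitz) and `x : [a,b] → U` is a continuous path of finite
`p`-variation, then `f ∘ x` has finite `p`-variation on `[a,b]`. -/
theorem statement12 (p : ℝ) (hp : 1 ≤ p)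
    {E F : Type*} [NormedAddCommGroup E] [NormedSpace ℝ E]
    [NormedAddCommGroup F] [NormedSpace ℝ F]
    (U : Set E) (a b : ℝ) (hab : a ≤ b)
    (f : E → F)
    (hf : ∀ z ∈ U, ∃ V ∈ nhdsWithin z U, ∃ M : ℝ,
      ∀ u ∈ V, ∀ v ∈ V, ‖f u - f v‖ ≤ M * ‖u - v‖)
    (x : ℝ → E)
    (hxU : ∀ s ∈ Set.Icc a b, x s ∈ U)
    (hxc : ContinuousOn x (Set.Icc a b))
    (hxv : HasFinitePVariation p a b x) :
    HasFinitePVariation p a b (f ∘ x) := by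
  classical
  set K : Set E := x '' Set.Icc a b with hKdef
  have hK : IsCompact K := (isCompact_Icc).image_of_continuousOn hxc
  have hKU : K ⊆ U := by
    rintro _ ⟨s, hs, rfl⟩; exact hxU s hs
  -- choose Lipschitz data
  choose! V hV M hM using hf
  -- radii
  have hr' : ∀ z ∈ U, ∃ ε > 0, Metric.ball z ε ∩ U ⊆ V z := by
    intro z hz
    exact Metric.mem_nhdsWithin_iff.mp (hV z hz)
  choose! r hrpos hrball using hr'
  -- f is continuous on U
  have hfc : ContinuousOn f U := by
    intro z hz
    have hzV : z ∈ V z := mem_of_mem_nhdsWithin hz (hV z hz)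
    rw [ContinuousWithinAt, ← tendsto_sub_nhds_zero_iff]
    have hg : Filter.Tendsto (fun w => M z * ‖w - z‖) (nhdsWithin z U) (nhds 0) := by
      have : Filter.Tendsto (fun w => M z * ‖w - z‖) (nhds z) (nhds (M z * ‖z - z‖)) :=
        ((continuous_const.mul ((continuous_id.sub continuous_const).norm)).tendsto z)
      simpa using this.mono_left nhdsWithin_le_nhds
    apply squeeze_zero_norm' _ hg
    filter_upwards [hV z hz] with w hw
    exact hM z hz w hw z hzV
  -- bound for f ∘ x
  obtain ⟨C, hC⟩ := isCompact_Icc.exists_bound_of_continuousOn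
    (hfc.comp hxc (fun s hs => hxU s hs))
  have hC0 : 0 ≤ C := le_trans (norm_nonneg _) (hC a (Set.left_mem_Icc.mpr hab))
  have hCK : ∀ u ∈ K, ‖f u‖ ≤ C := by
    rintro _ ⟨s, hs, rfl⟩; exact hC s hs
  -- finite subcover by half-radius balls
  obtain ⟨T, hTK, hTcov⟩ := hK.elim_nhds_subcover (fun z => Metric.ball z (r z / 2))
    (fun z hz => Metric.ball_mem_nhds z (by
      have := hrpos z (hKU hz); linarith))
  have hKne : K.Nonempty := ⟨x a, ⟨a, Set.left_mem_Icc.mpr hab, rfl⟩⟩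
  have hTne : T.Nonempty := by
    rcases Finset.eq_empty_or_nonempty T with h | h
    · exfalso
      obtain ⟨u, hu⟩ := hKne
      have := hTcov hu
      simp [h] at this
    · exact h
  set δ : ℝ := T.inf' hTne (fun z => r z / 2) with hδdef
  have hδpos : 0 < δ := by
    rw [hδdef, Finset.lt_inf'_iff]
    intro z hz
    have := hrpos z (hKU (hTK z hz)); linarith
  set M0 : ℝ := T.sup' hTne M with hM0def
  -- global Lipschitz constant on K
  set L : ℝ := max M0 (2 * C / δ) with hLdef
  have hL0 : 0 ≤ L := le_trans (by positivity) (le_max_right _ _)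
  have key : ∀ u ∈ K, ∀ v ∈ K, ‖f u - f v‖ ≤ L * ‖u - v‖ := by
    intro u hu v hv
    by_cases hsmall : ‖u - v‖ < δ
    · -- find a ball containing both
      obtain ⟨z, hzT, huz⟩ := by
        have := hTcov hu
        simpa using this
      have hzU : z ∈ U := hKU (hTK z hzT)
      have hδz : δ ≤ r z / 2 := Finset.inf'_le _ hzT
      have huV : u ∈ V z := hrball z hzU ⟨by
        have : dist u z < r z / 2 := huz
        simp only [Metric.mem_ball]
        linarith, hKU hu⟩
      have hvV : v ∈ V z := by
        apply hrball z hzU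
        refine ⟨?_, hKU hv⟩
        have hduz : dist u z < r z / 2 := huz
        have hdvu : dist v u < δ := by
          rw [dist_eq_norm, ← norm_neg]; simpa [neg_sub] using hsmall
        have : dist v z ≤ dist v u + dist u z := dist_triangle v u z
        simp only [Metric.mem_ball]
        linarith
      have h1 : ‖f u - f v‖ ≤ M z * ‖u - v‖ := hM z hzU u huV v hvV
      have h2 : M z ≤ M0 := Finset.le_sup' M hzT
      calc ‖f u - f v‖ ≤ M z * ‖u - v‖ := h1
        _ ≤ M0 * ‖u - v‖ := mul_le_mul_of_nonneg_right h2 (norm_nonneg _)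
        _ ≤ L * ‖u - v‖ := mul_le_mul_of_nonneg_right (le_max_left _ _) (norm_nonneg _)
    · push_neg at hsmall
      have h1 : ‖f u - f v‖ ≤ 2 * C := by
        calc ‖f u - f v‖ ≤ ‖f u‖ + ‖f v‖ := norm_sub_le _ _
          _ ≤ C + C := add_le_add (hCK u hu) (hCK v hv)
          _ = 2 * C := by ring
      calc ‖f u - f v‖ ≤ 2 * C := h1
        _ = (2 * C / δ) * δ := by field_simp
        _ ≤ (2 * C / δ) * ‖u - v‖ := mul_le_mul_of_nonneg_left hsmall (by positivity)
        _ ≤ L * ‖u - v‖ := mul_le_mul_of_nonneg_right (le_max_right _ _) (norm_nonneg _)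
  -- now bound the subdivision sums
  obtain ⟨S, hS⟩ := hxv
  refine ⟨L ^ p * S, ?_⟩
  rintro v ⟨n, t, ht0, htn, hmono, rfl⟩
  -- t i ∈ [a, b] for i ≤ n
  have hmono' : ∀ j ≤ n, ∀ i ≤ j, t i ≤ t j := by
    intro j hj
    induction j with
    | zero => intro i hi; interval_cases i; exact le_rfl
    | succ k ih =>
      intro i hi
      rcases Nat.lt_or_ge i (k + 1) with h | h
      · exact le_trans (ih (by omega) i (by omega)) (hmono k (by omega))
      · have : i = k + 1 := by omega
        subst this; exact le_rfl
  have htIcc : ∀ i ≤ n, t i ∈ Set.Icc a b := by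
    intro i hi
    constructor
    · rw [← ht0]; exact hmono' i hi 0 (Nat.zero_le _)
    · rw [← htn]; exact hmono' n le_rfl i hi
  have hxK : ∀ i ≤ n, x (t i) ∈ K := fun i hi => ⟨t i, htIcc i hi, rfl⟩
  have hterm : ∀ i ∈ Finset.range n,
      ‖(f ∘ x) (t (i + 1)) - (f ∘ x) (t i)‖ ^ p ≤ L ^ p * ‖x (t (i + 1)) - x (t i)‖ ^ p := by
    intro i hi
    rw [Finset.mem_range] at hi
    have h1 : ‖(f ∘ x) (t (i + 1)) - (f ∘ x) (t i)‖ ≤ L * ‖x (t (i + 1)) - x (t i)‖ :=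
      key _ (hxK (i + 1) (by omega)) _ (hxK i (by omega))
    calc ‖(f ∘ x) (t (i + 1)) - (f ∘ x) (t i)‖ ^ p
        ≤ (L * ‖x (t (i + 1)) - x (t i)‖) ^ p :=
          Real.rpow_le_rpow (norm_nonneg _) h1 (by linarith)
      _ = L ^ p * ‖x (t (i + 1)) - x (t i)‖ ^ p := Real.mul_rpow hL0 (norm_nonneg _)
  calc ∑ i ∈ Finset.range n, ‖(f ∘ x) (t (i + 1)) - (f ∘ x) (t i)‖ ^ p
      ≤ ∑ i ∈ Finset.range n, L ^ p * ‖x (t (i + 1)) - x (t i)‖ ^ p :=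
        Finset.sum_le_sum hterm
    _ = L ^ p * ∑ i ∈ Finset.range n, ‖x (t (i + 1)) - x (t i)‖ ^ p := by
        rw [Finset.mul_sum]
    _ ≤ L ^ p * S := by
        apply mul_le_mul_of_nonneg_left _ (Real.rpow_nonneg hL0 p)
        exact hS ⟨n, t, ht0, htn, hmono, rfl⟩
end

section
/- Let n ∈ ℕ, 0 < ε ≤ 1, C ≥ 0, let E and F be normed vector spaces and U a subset of E. Let f : U → F be a map and, for each k ∈ {1,…,n}, let f^k : U → L(E^{⊗k}, F) take values in the symmetric continuous k-linear maps from E to F. Consider: (A1) the collection (f, f^1,…,f^n) is Lipschitz-(n+ε) with norm at most C, i.e., sup_{x∈U} ‖f^k(x)‖ ≤ C for every k ∈ {0,…,n} (with f^0 = f), and there exist remainder maps R_k : U×U → L(E^{⊗k}, F) for k ∈ {0,…,n} such that for all x, y ∈ U and every k, f^k(x)(v) = Σ_{j=k}^{n} f^j(y)(v ⊗ (x−y)^{⊗(j−k)}/(j−k)!) + R_k(x,y)(v) for all v ∈ E^{⊗k}, with ‖R_k(x,y)‖ ≤ C‖x−y‖^{n+ε−k}. (A2) f is n times differentiable on U with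 successive derivatives f^1,…,f^n, the sup norms ‖f‖_∞, ‖f^1‖_∞, …, ‖f^n‖_∞ on U are all at most C, and ‖f^n(x) − f^n(y)‖ ≤ C‖x−y‖^ε for all x, y ∈ U. Then: if U is open, (A1) implies (A2); if moreover U is open and convex, (A1) and (A2) are equivalent. -/
open Finset Set

noncomputable section

variable {E F : Type*} [NormedAddCommGroup E] [NormedSpace ℝ E]
  [NormedAddCommGroup F] [NormedSpace ℝ F]

/-- Assertion (A1): the collection `(f^0, f^1, …, f^n)` is Lipschitz-`(n+ε)` on `U`
with constant `C`: all `f^k` are bounded by `C` in norm on `U`, and there are remainders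
`R_k` such that the Taylor-type expansion
`f^k(x)(v) = Σ_{j=k}^n f^j(y)(v ⊗ (x−y)^{⊗(j−k)}/(j−k)!) + R_k(x,y)(v)` holds with
`‖R_k(x,y)‖ ≤ C ‖x−y‖^{n+ε−k}`. -/
def LipA1 (n : ℕ) (ε C : ℝ) (U : Set E)
    (f : ∀ k : ℕ, E → ContinuousMultilinearMap ℝ (fun _ : Fin k => E) F) : Prop :=
  (∀ k ≤ n, ∀ x ∈ U, ‖f k x‖ ≤ C) ∧
  ∃ R : ∀ k : ℕ, E → E → ContinuousMultilinearMap ℝ (fun _ : Fin k => E) F,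
    (∀ k ≤ n, ∀ x ∈ U, ∀ y ∈ U, ∀ v : Fin k → E,
      f k x v =
        (∑ j ∈ Finset.Icc k n, (((j - k).factorial : ℝ))⁻¹ •
          f j y (fun i : Fin j => if h : (i : ℕ) < k then v ⟨(i : ℕ), h⟩ else x - y))
        + R k x y v) ∧
    (∀ k ≤ n, ∀ x ∈ U, ∀ y ∈ U, ‖R k x y‖ ≤ C * ‖x - y‖ ^ ((n : ℝ) + ε - (k : ℝ)))

/-- Assertion (A2): `f^0` is `n` times differentiable on `U` with successive
derivatives `f^1, …, f^n` (in the sense that the Fréchet derivative of `f^k` at each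
point of `U` is `f^{k+1}` curried in its first argument), the sup norms of
`f^0, …, f^n` on `U` are at most `C`, and `f^n` is `ε`-Hölder on `U` with constant `C`. -/
def LipA2 (n : ℕ) (ε C : ℝ) (U : Set E)
    (f : ∀ k : ℕ, E → ContinuousMultilinearMap ℝ (fun _ : Fin k => E) F) : Prop :=
  (∀ k ≤ n, ∀ x ∈ U, ‖f k x‖ ≤ C) ∧
  (∀ k < n, ∀ x ∈ U,
    HasFDerivWithinAt (f k) (ContinuousMultilinearMap.curryLeft (f (k + 1) x)) U x) ∧
  (∀ x ∈ U, ∀ y ∈ U, ‖f n x - f n y‖ ≤ C * ‖x - y‖ ^ ε)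


namespace Stmt17

/-- The argument vector: first `k` slots from `v`, the rest equal to `h`. -/
def argVec (k j : ℕ) (v : Fin k → E) (h : E) : Fin j → E :=
  fun i => if hh : (i : ℕ) < k then v ⟨(i : ℕ), hh⟩ else h

lemma argVec_self (k : ℕ) (v : Fin k → E) (h : E) : argVec k k v h = v := by
  funext i; simp [argVec, i.isLt]

lemma prod_argVec (k j : ℕ) (hkj : k ≤ j) (v : Fin k → E) (h : E) :
    (∏ i : Fin j, ‖argVec k j v h i‖) = (∏ i : Fin k, ‖v i‖) * ‖h‖ ^ (j - k) := by
  obtain ⟨m, rfl⟩ := Nat.exists_eq_add_of_le hkj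
  set gN : ℕ → ℝ := fun i => if hh : i < k then ‖v ⟨i, hh⟩‖ else ‖h‖ with hgN
  have h1 : (∏ i : Fin (k + m), ‖argVec k (k + m) v h i‖) = ∏ i ∈ Finset.range (k + m), gN i := by
    rw [← Fin.prod_univ_eq_prod_range]
    refine Finset.prod_congr rfl fun i _ => ?_
    simp only [argVec, gN]
    split_ifs <;> rfl
  have h2 : (∏ i : Fin k, ‖v i‖) = ∏ i ∈ Finset.range k, gN i := by
    rw [← Fin.prod_univ_eq_prod_range]
    refine Finset.prod_congr rfl fun i _ => ?_
    simp [gN, i.isLt]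
  rw [h1, Finset.prod_range_add, ← h2, Nat.add_sub_cancel_left]
  congr 1
  rw [show (∏ i ∈ Finset.range m, gN (k + i)) = ∏ _i ∈ Finset.range m, ‖h‖ from
    Finset.prod_congr rfl fun i _ => by simp [gN]]
  simp

/-- Characterization of `Fin.cons` by values. -/
lemma cons_val {j : ℕ} (x : E) (p : Fin j → E) (m : Fin (j + 1)) :
    (Fin.cons x p : Fin (j + 1) → E) m
      = if hm : (m : ℕ) = 0 then x else p ⟨(m : ℕ) - 1, by omega⟩ := by
  rcases m with ⟨mv, hm⟩
  cases mv with
  | zero => simp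
  | succ i =>
    have h1 : (⟨i + 1, hm⟩ : Fin (j + 1)) = Fin.succ ⟨i, by omega⟩ := rfl
    rw [h1, Fin.cons_succ]
    simp

/-- The cycle permutation moving slot `k` to the front. -/
def cyclePerm (k j : ℕ) (hkj : k ≤ j) : Equiv.Perm (Fin (j + 1)) where
  toFun i := ⟨if (i : ℕ) < k then (i : ℕ) + 1 else if (i : ℕ) = k then 0 else (i : ℕ),
    by have := i.isLt; split_ifs <;> omega⟩
  invFun i := ⟨if (i : ℕ) = 0 then k else if (i : ℕ) ≤ k then (i : ℕ) - 1 else (i : ℕ),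
    by have := i.isLt; split_ifs <;> omega⟩
  left_inv i := by
    apply Fin.ext
    have := i.isLt
    simp only [Fin.val_mk]
    split_ifs <;> first | omega | simp_all
  right_inv i := by
    apply Fin.ext
    have := i.isLt
    simp only [Fin.val_mk]
    split_ifs <;> first | omega | simp_all

lemma cyclePerm_spec (k j : ℕ) (hkj : k ≤ j) (v : Fin k → E) (h : E) :
    (Fin.cons h (argVec k j v h) : Fin (j + 1) → E) ∘ (cyclePerm k j hkj)
      = argVec k (j + 1) v h := by
  funext i
  have := i.isLt
  simp only [Function.comp_apply, cons_val, cyclePerm, Equiv.coe_fn_mk, argVec, Fin.val_mk]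
  split_ifs <;> first
    | rfl
    | omega
    | simp_all
    | (congr 1; apply Fin.ext; simp only [Fin.val_mk]; omega)

lemma symm_cons {k j : ℕ} (g : ContinuousMultilinearMap ℝ (fun _ : Fin (j + 1) => E) F)
    (hg : ∀ (σ : Equiv.Perm (Fin (j + 1))) (w : Fin (j + 1) → E), g (w ∘ σ) = g w)
    (hkj : k ≤ j) (v : Fin k → E) (h : E) :
    g (Fin.cons h (argVec k j v h)) = g (argVec k (j + 1) v h) := by
  rw [← hg (cyclePerm k j hkj) (Fin.cons h (argVec k j v h)), cyclePerm_spec]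

/-- Fix the last `m` arguments of a continuous multilinear map to `h`. -/
def fixT {k : ℕ} : ∀ m : ℕ, ContinuousMultilinearMap ℝ (fun _ : Fin (k + m) => E) F → E →
    ContinuousMultilinearMap ℝ (fun _ : Fin k => E) F
  | 0, g, _ => g
  | m + 1, g, h => fixT m
      ((ContinuousLinearMap.apply ℝ F h).compContinuousMultilinearMap g.curryRight) h

lemma fixT_apply {k : ℕ} : ∀ (m : ℕ) (g : ContinuousMultilinearMap ℝ (fun _ : Fin (k + m) => E) F)
    (h : E) (v : Fin k → E), fixT m g h v = g (argVec k (k + m) v h)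
  | 0, g, h, v => by
    show g v = g (argVec k (k + 0) v h)
    congr 1
    funext i
    simp [argVec, show (i : ℕ) < k from i.isLt]
  | m + 1, g, h, v => by
    rw [fixT, fixT_apply m]
    simp only [ContinuousLinearMap.compContinuousMultilinearMap_coe, Function.comp_apply,
      ContinuousLinearMap.apply_apply, ContinuousMultilinearMap.curryRight_apply]
    show g (Fin.snoc (argVec k (k + m) v h) h) = g (argVec k (k + (m + 1)) v h)
    congr 1
    funext i
    induction i using Fin.lastCases with
    | last => simp [argVec, Fin.snoc_last]
    | cast i => simp only [Fin.snoc_castSucc, argVec, Fin.coe_castSucc]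

lemma argVec_comp_finCongr {j j' : ℕ} (hjj : j = j') (k : ℕ) (v : Fin k → E) (w : E) :
    (fun i : Fin j => argVec k j' v w (finCongr hjj i)) = argVec k j v w := by
  subst hjj
  simp [finCongr_refl]

lemma fixT_cast_apply {k j : ℕ} (hkj : k ≤ j)
    (g : ContinuousMultilinearMap ℝ (fun _ : Fin j => E) F) (h : E) (v : Fin k → E) :
    fixT (j - k) (g.domDomCongr (finCongr (by omega : j = k + (j - k)))) h v
      = g (argVec k j v h) := by
  rw [fixT_apply, ContinuousMultilinearMap.domDomCongr_apply, argVec_comp_finCongr]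

lemma a1_to_a2 (n : ℕ) (ε C : ℝ) (hε0 : 0 < ε) (hε1 : ε ≤ 1) (hC : 0 ≤ C)
    (U : Set E)
    (f : ∀ k : ℕ, E → ContinuousMultilinearMap ℝ (fun _ : Fin k => E) F)
    (hsymm : ∀ k ≤ n, ∀ x ∈ U, ∀ (σ : Equiv.Perm (Fin k)) (v : Fin k → E),
      f k x (v ∘ σ) = f k x v)
    (hA1 : LipA1 n ε C U f) : LipA2 n ε C U f := by
  obtain ⟨hbound, R, hEq, hR⟩ := hA1
  refine ⟨hbound, ?_, ?_⟩
  · -- derivatives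
    intro k hkn x hx
    have key : ∀ y' ∈ U, ‖y' - x‖ ≤ 1 →
        ‖f k y' - f k x - (f (k + 1) x).curryLeft (y' - x)‖
          ≤ ((n : ℝ) + 1) * C * ‖y' - x‖ ^ ((1 : ℝ) + ε) := by
      intro y' hy' hw1
      have hw0 : (0:ℝ) ≤ ‖y' - x‖ := norm_nonneg _
      have hX0 : (0:ℝ) ≤ ‖y' - x‖ ^ ((1:ℝ) + ε) := Real.rpow_nonneg hw0 _
      refine ContinuousMultilinearMap.opNorm_le_bound
        (mul_nonneg (mul_nonneg (by positivity) hC) hX0) fun v => ?_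
      have hP : (0:ℝ) ≤ ∏ i : Fin k, ‖v i‖ := Finset.prod_nonneg fun i _ => norm_nonneg _
      have harg : ∀ j : ℕ,
          (fun i : Fin j => if hh : (i : ℕ) < k then v ⟨(i : ℕ), hh⟩ else y' - x)
            = argVec k j v (y' - x) := fun j => rfl
      have hsplit : Finset.Icc k n = insert k (insert (k+1) (Finset.Icc (k+2) n)) := by
        ext a; simp only [Finset.mem_Icc, Finset.mem_insert]; omega
      have hnm1 : k ∉ insert (k+1) (Finset.Icc (k+2) n) := by
        simp only [Finset.mem_insert, Finset.mem_Icc]; omega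
      have hnm2 : k + 1 ∉ Finset.Icc (k+2) n := by simp only [Finset.mem_Icc]; omega
      have hswap : f (k+1) x (Fin.cons (y' - x) v) = f (k+1) x (argVec k (k+1) v (y'-x)) := by
        have h0 := symm_cons (f (k+1) x)
          (fun σ vv => hsymm (k+1) (by omega) x hx σ vv) (le_refl k) v (y' - x)
        rwa [argVec_self] at h0
      have hval : (f k y' - f k x - (f (k + 1) x).curryLeft (y' - x)) v
          = (∑ j ∈ Finset.Icc (k+2) n,
              (((j - k).factorial : ℝ))⁻¹ • f j x (argVec k j v (y'-x)))
            + R k y' x v := by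
        simp only [ContinuousMultilinearMap.sub_apply]
        rw [hEq k (le_of_lt hkn) y' hy' x hx v]
        simp only [harg]
        rw [hsplit, Finset.sum_insert hnm1, Finset.sum_insert hnm2,
          ContinuousMultilinearMap.curryLeft_apply, hswap]
        simp only [Nat.sub_self, Nat.add_sub_cancel_left, Nat.factorial_zero,
          Nat.factorial_one, Nat.cast_one, inv_one, one_smul, argVec_self]
        abel
      rw [hval]
      have hrp : ∀ j : ℕ, k + 2 ≤ j →
          ‖y' - x‖ ^ (j - k) ≤ ‖y' - x‖ ^ ((1:ℝ)+ε) := by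
        intro j hj
        rw [← Real.rpow_natCast ‖y' - x‖ (j - k)]
        apply Real.rpow_le_rpow_of_exponent_ge' hw0 hw1 (by positivity)
        have h2j : (2:ℝ) ≤ ((j - k : ℕ) : ℝ) := by exact_mod_cast (by omega : 2 ≤ j - k)
        linarith
      have hterm : ∀ j ∈ Finset.Icc (k+2) n,
          ‖(((j - k).factorial : ℝ))⁻¹ • f j x (argVec k j v (y'-x))‖
            ≤ C * ‖y' - x‖ ^ ((1:ℝ)+ε) * ∏ i : Fin k, ‖v i‖ := by
        intro j hj
        rw [Finset.mem_Icc] at hj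
        rw [norm_smul]
        have h1 : ‖(((j - k).factorial : ℝ))⁻¹‖ ≤ 1 := by
          rw [Real.norm_eq_abs, abs_of_nonneg (by positivity)]
          apply inv_le_one_of_one_le₀
          exact_mod_cast Nat.one_le_iff_ne_zero.mpr (Nat.factorial_ne_zero _)
        have h2 : ‖f j x (argVec k j v (y'-x))‖
            ≤ C * (∏ i : Fin k, ‖v i‖) * ‖y' - x‖ ^ ((1:ℝ)+ε) := by
          calc ‖f j x (argVec k j v (y'-x))‖
              ≤ ‖f j x‖ * ∏ i : Fin j, ‖argVec k j v (y'-x) i‖ := (f j x).le_opNorm _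
            _ = ‖f j x‖ * ((∏ i : Fin k, ‖v i‖) * ‖y' - x‖ ^ (j - k)) := by
                rw [prod_argVec k j (by omega)]
            _ ≤ C * ((∏ i : Fin k, ‖v i‖) * ‖y' - x‖ ^ ((1:ℝ)+ε)) := by
                apply mul_le_mul (hbound j hj.2 x hx)
                  (mul_le_mul_of_nonneg_left (hrp j hj.1) hP)
                  (mul_nonneg hP (by positivity)) hC
            _ = C * (∏ i : Fin k, ‖v i‖) * ‖y' - x‖ ^ ((1:ℝ)+ε) := by ring
        calc ‖(((j - k).factorial : ℝ))⁻¹‖ * ‖f j x (argVec k j v (y'-x))‖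
            ≤ 1 * (C * (∏ i : Fin k, ‖v i‖) * ‖y' - x‖ ^ ((1:ℝ)+ε)) :=
              mul_le_mul h1 h2 (norm_nonneg _) one_pos.le
          _ = C * ‖y' - x‖ ^ ((1:ℝ)+ε) * ∏ i : Fin k, ‖v i‖ := by ring
      have hS : ‖∑ j ∈ Finset.Icc (k+2) n,
          (((j - k).factorial : ℝ))⁻¹ • f j x (argVec k j v (y'-x))‖
            ≤ (n:ℝ) * (C * ‖y' - x‖ ^ ((1:ℝ)+ε) * ∏ i : Fin k, ‖v i‖) := by
        refine (norm_sum_le _ _).trans ((Finset.sum_le_sum hterm).trans ?_)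
        rw [Finset.sum_const, nsmul_eq_mul]
        apply mul_le_mul_of_nonneg_right _ (by
          exact mul_nonneg (mul_nonneg hC hX0) hP)
        · rw [Nat.card_Icc]; exact_mod_cast (by omega : n + 1 - (k+2) ≤ n)
      have hRv : ‖R k y' x v‖ ≤ C * ‖y' - x‖ ^ ((1:ℝ)+ε) * ∏ i : Fin k, ‖v i‖ := by
        calc ‖R k y' x v‖ ≤ ‖R k y' x‖ * ∏ i : Fin k, ‖v i‖ := (R k y' x).le_opNorm _
          _ ≤ (C * ‖y' - x‖ ^ ((n:ℝ) + ε - (k:ℝ))) * ∏ i : Fin k, ‖v i‖ :=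
              mul_le_mul_of_nonneg_right (hR k (le_of_lt hkn) y' hy' x hx) hP
          _ ≤ C * ‖y' - x‖ ^ ((1:ℝ)+ε) * ∏ i : Fin k, ‖v i‖ := by
              apply mul_le_mul_of_nonneg_right _ hP
              apply mul_le_mul_of_nonneg_left _ hC
              apply Real.rpow_le_rpow_of_exponent_ge' hw0 hw1 (by positivity)
              have hkn' : (k:ℝ) + 1 ≤ (n:ℝ) := by exact_mod_cast hkn
              linarith
      calc ‖(∑ j ∈ Finset.Icc (k+2) n,
              (((j - k).factorial : ℝ))⁻¹ • f j x (argVec k j v (y'-x)))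
            + R k y' x v‖
          ≤ (n:ℝ) * (C * ‖y' - x‖ ^ ((1:ℝ)+ε) * ∏ i : Fin k, ‖v i‖)
            + C * ‖y' - x‖ ^ ((1:ℝ)+ε) * ∏ i : Fin k, ‖v i‖ :=
            (norm_add_le _ _).trans (add_le_add hS hRv)
        _ = ((n:ℝ) + 1) * C * ‖y' - x‖ ^ ((1:ℝ)+ε) * ∏ i : Fin k, ‖v i‖ := by ring
    -- now the little-o argument
    refine HasFDerivAtFilter.of_isLittleO ?_
    rw [Asymptotics.isLittleO_iff]
    intro c hc
    have hK0 : (0:ℝ) < ((n:ℝ)+1) * C + 1 := by positivity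
    set K : ℝ := ((n:ℝ)+1) * C + 1 with hKdef
    set δ : ℝ := min 1 ((c / K) ^ (ε⁻¹)) with hδdef
    have hδ0 : 0 < δ := lt_min one_pos (Real.rpow_pos_of_pos (div_pos hc hK0) _)
    rw [Filter.prod_pure, Filter.eventually_map, eventually_nhdsWithin_iff, Metric.eventually_nhds_iff]
    refine ⟨δ, hδ0, fun {y} hyd hyU => ?_⟩
    by_cases hxy : y = x
    · subst hxy; simp
    · have hd : ‖y - x‖ < δ := by rwa [dist_eq_norm] at hyd
      have h1 : ‖y - x‖ ≤ 1 := le_trans hd.le (min_le_left _ _)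
      have h2 := key y hyU h1
      have h3 : ‖y - x‖ ^ ε ≤ c / K := by
        have h5 := Real.rpow_le_rpow (norm_nonneg _)
          (le_trans hd.le (min_le_right _ _)) (le_of_lt hε0)
        rwa [Real.rpow_inv_rpow (le_of_lt (div_pos hc hK0)) (ne_of_gt hε0)] at h5
      have h4 : ‖y - x‖ ^ ((1:ℝ) + ε) = ‖y - x‖ * ‖y - x‖ ^ ε := by
        rw [Real.rpow_add' (norm_nonneg _) (by positivity), Real.rpow_one]
      calc ‖f k y - f k x - (f (k + 1) x).curryLeft (y - x)‖
          ≤ ((n:ℝ)+1) * C * ‖y - x‖ ^ ((1:ℝ)+ε) := h2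
        _ ≤ K * (‖y - x‖ * (c / K)) := by
            rw [h4]
            apply mul_le_mul (by rw [hKdef]; linarith)
              (mul_le_mul_of_nonneg_left h3 (norm_nonneg _))
              (mul_nonneg (norm_nonneg _) (Real.rpow_nonneg (norm_nonneg _) _))
              (le_of_lt hK0)
        _ = c * ‖y - x‖ := by field_simp
  · -- Hölder
    intro x hx y hy
    refine ContinuousMultilinearMap.opNorm_le_bound
      (mul_nonneg hC (Real.rpow_nonneg (norm_nonneg _) _)) fun v => ?_
    have hP : (0:ℝ) ≤ ∏ i : Fin n, ‖v i‖ := Finset.prod_nonneg fun i _ => norm_nonneg _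
    have hfeq : (f n x - f n y) v = R n x y v := by
      have h0 := hEq n le_rfl x hx y hy v
      rw [Finset.Icc_self, Finset.sum_singleton] at h0
      rw [show (fun i : Fin n => if hh : (i : ℕ) < n then v ⟨(i : ℕ), hh⟩ else x - y) = v
        from argVec_self n v (x - y)] at h0
      simp only [Nat.sub_self, Nat.factorial_zero, Nat.cast_one, inv_one, one_smul] at h0
      rw [ContinuousMultilinearMap.sub_apply, h0]
      abel
    rw [hfeq]
    have hee : (n:ℝ) + ε - (n:ℝ) = ε := by ring
    calc ‖R n x y v‖ ≤ ‖R n x y‖ * ∏ i : Fin n, ‖v i‖ := (R n x y).le_opNorm _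
      _ ≤ (C * ‖x - y‖ ^ ((n:ℝ) + ε - (n:ℝ))) * ∏ i : Fin n, ‖v i‖ :=
          mul_le_mul_of_nonneg_right (hR n le_rfl x hx y hy) hP
      _ = C * ‖x - y‖ ^ ε * ∏ i : Fin n, ‖v i‖ := by rw [hee]


lemma a2_to_a1 (n : ℕ) (ε C : ℝ) (hε0 : 0 < ε) (hε1 : ε ≤ 1) (hC : 0 ≤ C)
    (U : Set E) (hconv : Convex ℝ U)
    (f : ∀ k : ℕ, E → ContinuousMultilinearMap ℝ (fun _ : Fin k => E) F)
    (hsymm : ∀ k ≤ n, ∀ x ∈ U, ∀ (σ : Equiv.Perm (Fin k)) (v : Fin k → E),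
      f k x (v ∘ σ) = f k x v)
    (hA2 : LipA2 n ε C U f) : LipA1 n ε C U f := by
  obtain ⟨hbound, hderiv, hHol⟩ := hA2
  have hRapply : ∀ (k : ℕ), k ≤ n → ∀ (x y : E) (v : Fin k → E),
      (f k x - ∑ j ∈ Finset.Icc k n, (((j - k).factorial : ℝ))⁻¹ •
        (if hj : k ≤ j then
          fixT (j - k) ((f j y).domDomCongr (finCongr (by omega : j = k + (j - k)))) (x - y)
        else 0)) v
      = f k x v - ∑ j ∈ Finset.Icc k n, (((j - k).factorial : ℝ))⁻¹ •
          f j y (fun i : Fin j => if hh : (i : ℕ) < k then v ⟨(i : ℕ), hh⟩ else x - y) := by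
    intro k hk x y v
    rw [ContinuousMultilinearMap.sub_apply, ContinuousMultilinearMap.sum_apply]
    congr 1
    refine Finset.sum_congr rfl fun j hj => ?_
    rw [Finset.mem_Icc] at hj
    rw [ContinuousMultilinearMap.smul_apply, dif_pos hj.1, fixT_cast_apply hj.1]
    rfl
  refine ⟨hbound, ⟨fun k x y => f k x - ∑ j ∈ Finset.Icc k n, (((j - k).factorial : ℝ))⁻¹ •
    (if hj : k ≤ j then
      fixT (j - k) ((f j y).domDomCongr (finCongr (by omega : j = k + (j - k)))) (x - y)
    else 0), ?_, ?_⟩⟩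
  · -- equation
    intro k hk x hx y hy v
    rw [hRapply k hk x y v]
    rw [add_comm, sub_add_cancel]
  · -- remainder bound
    intro k hk x hx y hy
    rcases eq_or_lt_of_le hk with hkn | hkn
    · -- k = n
      subst hkn
      refine ContinuousMultilinearMap.opNorm_le_bound
        (mul_nonneg hC (Real.rpow_nonneg (norm_nonneg _) _)) fun v => ?_
      rw [hRapply k le_rfl x y v]
      have hP : (0:ℝ) ≤ ∏ i : Fin k, ‖v i‖ := Finset.prod_nonneg fun i _ => norm_nonneg _
      rw [Finset.Icc_self, Finset.sum_singleton]
      rw [show (fun i : Fin k => if hh : (i : ℕ) < k then v ⟨(i : ℕ), hh⟩ else x - y) = v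
        from argVec_self k v (x - y)]
      simp only [Nat.sub_self, Nat.factorial_zero, Nat.cast_one, inv_one, one_smul]
      rw [← ContinuousMultilinearMap.sub_apply]
      have hee : (k:ℝ) + ε - (k:ℝ) = ε := by ring
      calc ‖(f k x - f k y) v‖ ≤ ‖f k x - f k y‖ * ∏ i : Fin k, ‖v i‖ :=
            (f k x - f k y).le_opNorm _
        _ ≤ (C * ‖x - y‖ ^ ε) * ∏ i : Fin k, ‖v i‖ :=
            mul_le_mul_of_nonneg_right (hHol x hx y hy) hP
        _ = C * ‖x - y‖ ^ ((k:ℝ) + ε - (k:ℝ)) * ∏ i : Fin k, ‖v i‖ := by rw [hee]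
    · -- k < n
      set m : ℕ := n - k - 1 with hmdef
      have hm : n = k + (m + 1) := by omega
      refine ContinuousMultilinearMap.opNorm_le_bound
        (mul_nonneg hC (Real.rpow_nonneg (norm_nonneg _) _)) fun v => ?_
      rw [hRapply k hk x y v]
      have hP : (0:ℝ) ≤ ∏ i : Fin k, ‖v i‖ := Finset.prod_nonneg fun i _ => norm_nonneg _
      set h : E := x - y with hhdef
      set c : ℝ → E := fun t => y + t • h with hcdef
      have hcmem : ∀ t ∈ Icc (0:ℝ) 1, c t ∈ U := by
        intro t ht
        rw [Set.mem_Icc] at ht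
        have h2 := hconv hy hx (by linarith : (0:ℝ) ≤ 1 - t) ht.1 (by ring)
        have h3 : (1 - t) • y + t • x = c t := by
          simp only [hcdef, hhdef]
          rw [sub_smul, smul_sub, one_smul]
          abel
        rwa [h3] at h2
      set ψ : ℝ → F := fun t =>
        (∑ i ∈ Finset.range (m+1),
          (((i.factorial:ℝ))⁻¹ * (1-t)^i) • f (k+i) (c t) (argVec k (k+i) v h))
        + ((((m+1).factorial:ℝ))⁻¹ * (1-t)^(m+1)) • f n y (argVec k n v h) with hψdef
      set ρ : ℝ → F := fun t =>
        (((m.factorial:ℝ))⁻¹ * (1-t)^m) •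
          (f n (c t) (argVec k n v h) - f n y (argVec k n v h)) with hρdef
      have hcoef : ∀ i : ℕ, ((i:ℝ)+1) * (((i+1).factorial:ℝ))⁻¹ = ((i.factorial:ℝ))⁻¹ := by
        intro i
        rw [Nat.factorial_succ]
        push_cast
        rw [mul_inv, ← mul_assoc, mul_inv_cancel₀ (by positivity : ((i:ℝ)+1) ≠ 0), one_mul]
      have hψderiv : ∀ t ∈ Icc (0:ℝ) 1, HasDerivWithinAt ψ (ρ t) (Icc 0 1) t := by
        intro t ht
        have hc' : HasDerivWithinAt c h (Icc 0 1) t := by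
          have h1 : HasDerivAt (fun s : ℝ => y + s • h) ((1:ℝ) • h) t :=
            ((hasDerivAt_id t).smul_const h).const_add y
          rw [one_smul] at h1; exact h1.hasDerivWithinAt
        have hφ : ∀ i : ℕ, HasDerivAt (fun s : ℝ => ((i.factorial:ℝ))⁻¹ * (1-s)^i)
            (((i.factorial:ℝ))⁻¹ * ((i:ℝ) * (1-t)^(i-1) * (-1))) t := by
          intro i
          have h0 : HasDerivAt (fun s : ℝ => 1 - s) (-1) t := (hasDerivAt_id t).const_sub 1
          have h1 := (hasDerivAt_pow i (1-t)).comp t h0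
          have h2 := h1.const_mul ((i.factorial:ℝ))⁻¹
          simpa [Function.comp] using h2
        have hTd : ∀ i : ℕ, k + i < n →
            HasDerivWithinAt (fun s => f (k+i) (c s) (argVec k (k+i) v h))
              (f (k+i+1) (c t) (argVec k (k+i+1) v h)) (Icc 0 1) t := by
          intro i hi
          have h1 : HasDerivWithinAt (fun s => f (k+i) (c s))
              ((f (k+i+1) (c t)).curryLeft h) (Icc 0 1) t :=
            (hderiv (k+i) hi (c t) (hcmem t ht)).comp_hasDerivWithinAt t hc'
              (fun s hs => hcmem s hs)
          have h2 := (ContinuousMultilinearMap.apply ℝ (fun _ : Fin (k+i) => E) F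
            (argVec k (k+i) v h)).hasFDerivAt.comp_hasDerivWithinAt t h1
          simp only [Function.comp_def, ContinuousMultilinearMap.apply_apply,
            ContinuousMultilinearMap.curryLeft_apply] at h2
          have h3 := symm_cons (f (k+i+1) (c t))
            (fun σ vv => hsymm (k+i+1) (by omega) (c t) (hcmem t ht) σ vv)
            (by omega : k ≤ k + i) v h
          rwa [h3] at h2
        have hsum : HasDerivWithinAt
            (fun s => ∑ i ∈ Finset.range (m+1),
              (((i.factorial:ℝ))⁻¹ * (1-s)^i) • f (k+i) (c s) (argVec k (k+i) v h))
            (∑ i ∈ Finset.range (m+1),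
              ((((i.factorial:ℝ))⁻¹ * (1-t)^i) • f (k+i+1) (c t) (argVec k (k+i+1) v h)
               + (((i.factorial:ℝ))⁻¹ * ((i:ℝ) * (1-t)^(i-1) * (-1))) •
                  f (k+i) (c t) (argVec k (k+i) v h)))
            (Icc 0 1) t := by
          refine HasDerivWithinAt.fun_sum fun i hi => ?_
          rw [Finset.mem_range] at hi
          exact ((hφ i).hasDerivWithinAt).smul (hTd i (by omega))
        have hlast : HasDerivWithinAt
            (fun s => ((((m+1).factorial:ℝ))⁻¹ * (1-s)^(m+1)) • f n y (argVec k n v h))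
            (((((m+1).factorial:ℝ))⁻¹ * (((m:ℝ)+1) * (1-t)^m * (-1))) • f n y (argVec k n v h))
            (Icc 0 1) t := by
          have h1 := ((hφ (m+1)).hasDerivWithinAt (s := Set.Icc 0 1)).smul_const (f n y (argVec k n v h))
          have h2 : (((m+1:ℕ)):ℝ) * (1-t)^((m+1)-1) = ((m:ℝ)+1) * (1-t)^m := by
            push_cast [Nat.add_sub_cancel]
            ring
          rw [h2] at h1
          exact h1
        have hψd := hsum.add hlast
        set g : ℕ → F := fun i =>
          (((i:ℝ) * ((i.factorial:ℝ))⁻¹) * (1-t)^(i-1)) • f (k+i) (c t) (argVec k (k+i) v h)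
          with hgdef
        have hterm2 : ∀ i ∈ Finset.range (m+1),
            ((((i.factorial:ℝ))⁻¹ * (1-t)^i) • f (k+i+1) (c t) (argVec k (k+i+1) v h)
             + (((i.factorial:ℝ))⁻¹ * ((i:ℝ) * (1-t)^(i-1) * (-1))) •
                f (k+i) (c t) (argVec k (k+i) v h))
            = g (i+1) - g i := by
          intro i _
          have e1 : g (i+1)
              = (((i.factorial:ℝ))⁻¹ * (1-t)^i) • f (k+i+1) (c t) (argVec k (k+i+1) v h) := by
            simp only [hgdef]
            congr 1
            push_cast [Nat.add_sub_cancel]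
            rw [hcoef i]
          have e2 : g i = -((((i.factorial:ℝ))⁻¹ * ((i:ℝ) * (1-t)^(i-1) * (-1))) •
              f (k+i) (c t) (argVec k (k+i) v h)) := by
            simp only [hgdef, ← neg_smul]
            congr 1
            ring
          rw [e1, e2, sub_neg_eq_add]
        have hgid : (∑ i ∈ Finset.range (m+1),
              ((((i.factorial:ℝ))⁻¹ * (1-t)^i) • f (k+i+1) (c t) (argVec k (k+i+1) v h)
               + (((i.factorial:ℝ))⁻¹ * ((i:ℝ) * (1-t)^(i-1) * (-1))) •
                  f (k+i) (c t) (argVec k (k+i) v h)))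
            + (((((m+1).factorial:ℝ))⁻¹ * (((m:ℝ)+1) * (1-t)^m * (-1))) •
                f n y (argVec k n v h))
            = ρ t := by
          rw [Finset.sum_congr rfl hterm2, Finset.sum_range_sub g (m+1)]
          have hg0 : g 0 = 0 := by simp [hgdef]
          have hgm : g (m+1)
              = (((m.factorial:ℝ))⁻¹ * (1-t)^m) • f n (c t) (argVec k n v h) := by
            simp only [hgdef]
            rw [hm]
            congr 1
            push_cast [Nat.add_sub_cancel]
            rw [hcoef m]
          have hlc : ((((m+1).factorial:ℝ))⁻¹ * (((m:ℝ)+1) * (1-t)^m * (-1)))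
              = -(((m.factorial:ℝ))⁻¹ * (1-t)^m) := by
            rw [show ((((m+1).factorial:ℝ))⁻¹ * (((m:ℝ)+1) * (1-t)^m * (-1)))
              = -((((m:ℝ)+1) * (((m+1).factorial:ℝ))⁻¹) * (1-t)^m) from by ring]
            rw [hcoef m]
          rw [hg0, hgm, hlc, sub_zero, neg_smul]
          show _ = (((m.factorial:ℝ))⁻¹ * (1-t)^m) •
            (f n (c t) (argVec k n v h) - f n y (argVec k n v h))
          rw [smul_sub]
          abel
        rw [hgid] at hψd
        exact hψd
      have hρbound : ∀ t ∈ Ico (0:ℝ) 1,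
          ‖ρ t‖ ≤ C * ‖h‖ ^ ε * ((∏ i : Fin k, ‖v i‖) * ‖h‖ ^ (n - k)) := by
        intro t ht
        rw [Set.mem_Ico] at ht
        have ht1 : (0:ℝ) ≤ 1 - t := by linarith
        rw [hρdef]
        rw [norm_smul]
        have hc1 : ‖((m.factorial:ℝ))⁻¹ * (1-t)^m‖ ≤ 1 := by
          rw [Real.norm_eq_abs, abs_of_nonneg (by positivity)]
          have i1 : ((m.factorial:ℝ))⁻¹ ≤ 1 := by
            apply inv_le_one_of_one_le₀
            exact_mod_cast Nat.one_le_iff_ne_zero.mpr (Nat.factorial_ne_zero _)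
          have i2 : (1-t)^m ≤ 1 := pow_le_one₀ ht1 (by linarith)
          calc ((m.factorial:ℝ))⁻¹ * (1-t)^m ≤ 1 * 1 :=
              mul_le_mul i1 i2 (by positivity) one_pos.le
            _ = 1 := by ring
        have hxyb : ‖c t - y‖ ≤ ‖h‖ := by
          simp only [hcdef]
          rw [add_sub_cancel_left, norm_smul, Real.norm_eq_abs, abs_of_nonneg ht.1]
          exact mul_le_of_le_one_left (norm_nonneg h) (le_of_lt ht.2)
        have hHb : ‖f n (c t) - f n y‖ ≤ C * ‖h‖ ^ ε := by
          refine (hHol (c t) (hcmem t (Set.Ico_subset_Icc_self (Set.mem_Ico.2 ht))) y hy).trans ?_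
          exact mul_le_mul_of_nonneg_left
            (Real.rpow_le_rpow (norm_nonneg _) hxyb (le_of_lt hε0)) hC
        rw [← ContinuousMultilinearMap.sub_apply]
        calc ‖((m.factorial:ℝ))⁻¹ * (1-t)^m‖ * ‖(f n (c t) - f n y) (argVec k n v h)‖
            ≤ 1 * ((C * ‖h‖ ^ ε) * ((∏ i : Fin k, ‖v i‖) * ‖h‖ ^ (n - k))) := by
              apply mul_le_mul hc1 ?_ (norm_nonneg _) one_pos.le
              calc ‖(f n (c t) - f n y) (argVec k n v h)‖
                  ≤ ‖f n (c t) - f n y‖ * ∏ i : Fin n, ‖argVec k n v h i‖ :=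
                    (f n (c t) - f n y).le_opNorm _
                _ = ‖f n (c t) - f n y‖ * ((∏ i : Fin k, ‖v i‖) * ‖h‖ ^ (n - k)) := by
                    rw [prod_argVec k n hk]
                _ ≤ (C * ‖h‖ ^ ε) * ((∏ i : Fin k, ‖v i‖) * ‖h‖ ^ (n - k)) :=
                    mul_le_mul_of_nonneg_right hHb
                      (mul_nonneg hP (pow_nonneg (norm_nonneg _) _))
          _ = C * ‖h‖ ^ ε * ((∏ i : Fin k, ‖v i‖) * ‖h‖ ^ (n - k)) := by ring
      have hMVT := norm_image_sub_le_of_norm_deriv_le_segment' hψderiv hρbound 1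
        (Set.right_mem_Icc.2 zero_le_one)
      have hψ1 : ψ 1 = f k x v := by
        have hc1x : c 1 = x := by
          simp only [hcdef, hhdef, one_smul]
          abel
        simp only [hψdef, sub_self]
        rw [Finset.sum_eq_single 0]
        · rw [zero_pow (Nat.succ_ne_zero m)]
          have h00 : f (k+0) (c 1) (argVec k (k+0) v h) = f k x v := by
            rw [hc1x]
            congr 1
            funext i
            simp [argVec, show (i:ℕ) < k from i.isLt]
          rw [h00]
          simp
        · intro i _ hne
          rw [zero_pow hne]
          simp
        · intro h0
          simp at h0
      have hψ0 : ψ 0 = ∑ j ∈ Finset.Icc k n, (((j - k).factorial : ℝ))⁻¹ •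
          f j y (fun i : Fin j => if hh : (i : ℕ) < k then v ⟨(i : ℕ), hh⟩ else x - y) := by
        have hc0 : c 0 = y := by simp [hcdef]
        have harg : ∀ j : ℕ,
            (fun i : Fin j => if hh : (i : ℕ) < k then v ⟨(i : ℕ), hh⟩ else x - y)
              = argVec k j v h := fun j => rfl
        simp only [hψdef, hc0, sub_zero, one_pow, mul_one, harg]
        rw [show Finset.Icc k n = Finset.Ico k (n+1) from (Finset.Ico_add_one_right_eq_Icc k n).symm]
        rw [Finset.sum_Ico_eq_sum_range]
        have hrange : n + 1 - k = (m + 1) + 1 := by omega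
        rw [hrange]
        conv_rhs => rw [Finset.sum_range_succ]
        congr 1
        · refine Finset.sum_congr rfl fun i _ => ?_
          rw [Nat.add_sub_cancel_left]
        · rw [Nat.add_sub_cancel_left, ← hm]
      rw [← hψ1, ← hψ0] at *
      have hfinal : ‖ψ 1 - ψ 0‖ ≤ C * ‖h‖ ^ ε * ((∏ i : Fin k, ‖v i‖) * ‖h‖ ^ (n - k)) := by
        have := hMVT
        linarith [hMVT]
      have hrw : C * ‖h‖ ^ ε * ((∏ i : Fin k, ‖v i‖) * ‖h‖ ^ (n - k))
          = (C * ‖h‖ ^ ((n:ℝ) + ε - (k:ℝ))) * ∏ i : Fin k, ‖v i‖ := by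
        have h1 : ‖h‖ ^ ((n:ℝ) + ε - (k:ℝ)) = ‖h‖ ^ (((n - k : ℕ)):ℝ) * ‖h‖ ^ ε := by
          rw [← Real.rpow_add' (norm_nonneg _) ?_]
          · congr 1
            rw [Nat.cast_sub hk]
            ring
          · have : (0:ℝ) < ((n - k : ℕ):ℝ) + ε := by positivity
            exact ne_of_gt this
        rw [h1, Real.rpow_natCast]
        ring
      calc ‖ψ 1 - ψ 0‖ ≤ C * ‖h‖ ^ ε * ((∏ i : Fin k, ‖v i‖) * ‖h‖ ^ (n - k)) := hfinal
        _ = (C * ‖h‖ ^ ((n:ℝ) + ε - (k:ℝ))) * ∏ i : Fin k, ‖v i‖ := hrw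
        _ = C * ‖x - y‖ ^ ((n:ℝ) + ε - (k:ℝ)) * ∏ i : Fin k, ‖v i‖ := by rw [hhdef]


end Stmt17

/-- For a collection `(f, f^1, …, f^n)` of maps on `U ⊆ E` with values in the symmetric
continuous multilinear maps: if `U` is open then (A1) implies (A2); if moreover `U` is
convex then (A1) and (A2) are equivalent. -/
theorem statement17 (n : ℕ) (ε C : ℝ) (hε0 : 0 < ε) (hε1 : ε ≤ 1) (hC : 0 ≤ C)
    (U : Set E)
    (f : ∀ k : ℕ, E → ContinuousMultilinearMap ℝ (fun _ : Fin k => E) F)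
    (hsymm : ∀ k ≤ n, ∀ x ∈ U, ∀ (σ : Equiv.Perm (Fin k)) (v : Fin k → E),
      f k x (v ∘ σ) = f k x v) :
    (IsOpen U → LipA1 n ε C U f → LipA2 n ε C U f) ∧
    (IsOpen U → Convex ℝ U → (LipA1 n ε C U f ↔ LipA2 n ε C U f)) := by
  constructor
  · intro _ h1
    exact Stmt17.a1_to_a2 n ε C hε0 hε1 hC U f hsymm h1
  · intro _ hconv
    exact ⟨Stmt17.a1_to_a2 n ε C hε0 hε1 hC U f hsymm,
      Stmt17.a2_to_a1 n ε C hε0 hε1 hC U hconv f hsymm⟩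


end
end
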